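/- arXiv:1810.11540 — 5 statements merged into one kernel-verified Lean document; each statement's English description precedes it below -/
import Mathlib

section
/- Let W be a complex vector space, σ a conjugate-linear involution on W, L ⊆ W a finite-dimensional complex subspace, L̄ := Submodule.map σ L. Let r, n ∈ ℕ, let x : Fin r → W satisfy σ(x k) = x k for all k, with the family x ℂ-linearly independent and Submodule.span ℂ (Set.range x) = L ⊓ L̄, and let l : Fin n → W with l j ∈ L for all j. Then the following are equivalent: (i) the family of r + 2n vectors (x 1, …, x r, Re(l 1), …, Re(l n), Im(l 1), …, Im(l n)) is ℂ-linearly independent and its ℂ-span equals L ⊔ L̄; (ii) the family (x 1, …, x r, l 1, …, l n) is ℂ-linearly independent and its ℂ-span equals L. -/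
open Submodule

noncomputable def conjRe {W : Type*} [AddCommGroup W] [Module ℂ W]
    (σ : W →ₛₗ[starRingEnd ℂ] W) (v : W) : W :=
  ((1 : ℂ) / 2) • (v + σ v)

noncomputable def conjIm {W : Type*} [AddCommGroup W] [Module ℂ W]
    (σ : W →ₛₗ[starRingEnd ℂ] W) (v : W) : W :=
  (-(Complex.I) / 2) • (v - σ v)

section aux
variable {W : Type*} [AddCommGroup W] [Module ℂ W] (σ : W →ₛₗ[starRingEnd ℂ] W)

private lemma I_neg_I_half : Complex.I * (-Complex.I / 2) = 1/2 := by
  rw [mul_div_assoc', mul_neg, Complex.I_mul_I]; norm_num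

lemma conj_reIm (v : W) : conjRe σ v + Complex.I • conjIm σ v = v := by
  unfold conjRe conjIm
  rw [smul_smul, I_neg_I_half]
  module

lemma conj_reIm' (v : W) : conjRe σ v - Complex.I • conjIm σ v = σ v := by
  unfold conjRe conjIm
  rw [smul_smul, I_neg_I_half]
  module

lemma conj_comb (b c : ℂ) (v : W) : b • conjRe σ v + c • conjIm σ v
    = ((b - Complex.I * c)/2) • v + ((b + Complex.I * c)/2) • σ v := by
  unfold conjRe conjIm
  rw [smul_smul, smul_smul]
  have h2 : c * (-Complex.I / 2) = -(Complex.I*c)/2 := by ring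
  rw [h2]
  module

/-- Key lemma: the family `(x, l, σ ∘ l)` is linearly independent. -/
lemma conj_key (hinv : ∀ w : W, σ (σ w) = w)
    (L : Submodule ℂ W)
    {r n : ℕ} {x : Fin r → W} (hx : ∀ k, σ (x k) = x k)
    (hxspan : Submodule.span ℂ (Set.range x) = L ⊓ Submodule.map σ L)
    {l : Fin n → W} (hl : ∀ j, l j ∈ L)
    (hli : LinearIndependent ℂ (Sum.elim x l))
    (a : Fin r → ℂ) (u w : Fin n → ℂ)
    (h : ∑ k, a k • x k + ∑ j, u j • l j + ∑ j, w j • σ (l j) = 0) :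
    (∀ k, a k = 0) ∧ (∀ j, u j = 0) ∧ (∀ j, w j = 0) := by
  have hx_mem : ∀ k, x k ∈ L := fun k => by
    have : x k ∈ Submodule.span ℂ (Set.range x) := subset_span ⟨k, rfl⟩
    rw [hxspan] at this; exact this.1
  set W0 : W := ∑ j, w j • σ (l j) with hW0
  have hW0L : W0 ∈ L := by
    have : W0 = -(∑ k, a k • x k + ∑ j, u j • l j) := by
      rw [hW0]; linear_combination (norm := abel) h
    rw [this]
    exact neg_mem (add_mem (Submodule.sum_mem _ fun k _ => smul_mem _ _ (hx_mem k))
      (Submodule.sum_mem _ fun j _ => smul_mem _ _ (hl j)))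
  have hW0M : W0 ∈ Submodule.map σ L :=
    Submodule.sum_mem _ fun j _ => smul_mem _ _ (mem_map_of_mem (hl j))
  have hW0span : W0 ∈ Submodule.span ℂ (Set.range x) := by
    rw [hxspan]; exact ⟨hW0L, hW0M⟩
  obtain ⟨c, hc⟩ := (mem_span_range_iff_exists_fun ℂ).mp hW0span
  -- apply σ to hc
  have hσ : ∑ k, (starRingEnd ℂ) (c k) • x k = ∑ j, (starRingEnd ℂ) (w j) • l j := by
    have := congrArg σ hc
    rw [map_sum, map_sum] at this
    simp only [LinearMap.map_smulₛₗ, hx, hinv] at this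
    exact this
  have hcw : ∀ i : Fin r ⊕ Fin n,
      (Sum.elim (fun k => (starRingEnd ℂ) (c k)) (fun j => -((starRingEnd ℂ) (w j)))) i = 0 := by
    apply Fintype.linearIndependent_iff.mp hli
    rw [Fintype.sum_sum_type]
    simp only [Sum.elim_inl, Sum.elim_inr, neg_smul, Finset.sum_neg_distrib]
    rw [hσ]
    abel
  have hw0 : ∀ j, w j = 0 := fun j => by
    have := hcw (Sum.inr j)
    simp only [Sum.elim_inr, neg_eq_zero, map_eq_zero] at this
    exact this
  have hc0 : ∀ k, c k = 0 := fun k => by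
    have := hcw (Sum.inl k)
    simp only [Sum.elim_inl, map_eq_zero] at this
    exact this
  have hW00 : W0 = 0 := by
    rw [← hc]
    simp [hc0]
  have h2 : ∑ k, a k • x k + ∑ j, u j • l j = 0 := by
    rw [hW00] at h
    linear_combination (norm := abel) h
  have hau : ∀ i : Fin r ⊕ Fin n, (Sum.elim a u) i = 0 := by
    apply Fintype.linearIndependent_iff.mp hli
    rw [Fintype.sum_sum_type]
    simpa using h2
  exact ⟨fun k => hau (Sum.inl k), fun j => hau (Sum.inr j), hw0⟩

end aux

/-- Let `W` be a complex vector space, `σ` a conjugate-linear involution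
on `W`, `L ⊆ W` a finite-dimensional complex subspace, `L̄ := Submodule.map σ L`.
Let `x : Fin r → W` satisfy `σ (x k) = x k` for all `k`, with `x` ℂ-linearly independent
and spanning `L ⊓ L̄`, and let `l : Fin n → W` with `l j ∈ L` for all `j`.  Then the
family `(x, Re ∘ l, Im ∘ l)` of `r + 2n` vectors is ℂ-linearly independent with ℂ-span
`L ⊔ L̄` if and only if the family `(x, l)` is ℂ-linearly independent with ℂ-span `L`. -/
theorem conj_basis_iff
    (W : Type*) [AddCommGroup W] [Module ℂ W]
    (σ : W →ₛₗ[starRingEnd ℂ] W) (hinv : ∀ w : W, σ (σ w) = w)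
    (L : Submodule ℂ W) [FiniteDimensional ℂ L]
    (r n : ℕ) (x : Fin r → W) (hx : ∀ k, σ (x k) = x k)
    (hxli : LinearIndependent ℂ x)
    (hxspan : Submodule.span ℂ (Set.range x) = L ⊓ Submodule.map σ L)
    (l : Fin n → W) (hl : ∀ j, l j ∈ L) :
    (LinearIndependent ℂ
        (Sum.elim x (Sum.elim (fun j => conjRe σ (l j)) (fun j => conjIm σ (l j))) :
          Fin r ⊕ (Fin n ⊕ Fin n) → W) ∧
      Submodule.span ℂ
          (Set.range (Sum.elim x
            (Sum.elim (fun j => conjRe σ (l j)) (fun j => conjIm σ (l j))) :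
              Fin r ⊕ (Fin n ⊕ Fin n) → W)) = L ⊔ Submodule.map σ L) ↔
    (LinearIndependent ℂ (Sum.elim x l : Fin r ⊕ Fin n → W) ∧
      Submodule.span ℂ (Set.range (Sum.elim x l : Fin r ⊕ Fin n → W)) = L) := by
  set F : Fin r ⊕ (Fin n ⊕ Fin n) → W :=
    Sum.elim x (Sum.elim (fun j => conjRe σ (l j)) (fun j => conjIm σ (l j))) with hF
  have hx_mem : ∀ k, x k ∈ L := fun k => by
    have : x k ∈ Submodule.span ℂ (Set.range x) := subset_span ⟨k, rfl⟩
    rw [hxspan] at this; exact this.1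
  constructor
  · rintro ⟨hI, hS⟩
    have hli : LinearIndependent ℂ (Sum.elim x l : Fin r ⊕ Fin n → W) := by
      rw [Fintype.linearIndependent_iff]
      intro g hg
      set G : Fin r ⊕ (Fin n ⊕ Fin n) → ℂ :=
        Sum.elim (fun k => g (Sum.inl k))
          (Sum.elim (fun j => g (Sum.inr j)) (fun j => Complex.I * g (Sum.inr j))) with hG
      have h2 : ∑ i, G i • F i = 0 := by
        rw [Fintype.sum_sum_type, Fintype.sum_sum_type]
        simp only [hG, hF, Sum.elim_inl, Sum.elim_inr]
        have key : ∀ j, g (Sum.inr j) • conjRe σ (l j)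
            + (Complex.I * g (Sum.inr j)) • conjIm σ (l j) = g (Sum.inr j) • l j := by
          intro j
          conv_rhs => rw [← conj_reIm σ (l j)]
          rw [smul_add, smul_smul, mul_comm]
        rw [← Finset.sum_add_distrib, Finset.sum_congr rfl (fun j _ => key j)]
        rw [Fintype.sum_sum_type] at hg
        simpa using hg
      have hG0 := Fintype.linearIndependent_iff.mp hI G h2
      rintro (k | j)
      · exact hG0 (Sum.inl k)
      · exact hG0 (Sum.inr (Sum.inl j))
    refine ⟨hli, le_antisymm ?_ ?_⟩
    · rw [span_le]
      rintro _ ⟨(k | j), rfl⟩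
      · exact hx_mem k
      · exact hl j
    · intro v hv
      have hv' : v ∈ Submodule.span ℂ (Set.range F) := by
        rw [hS]; exact le_sup_left (α := Submodule ℂ W) hv
      obtain ⟨G, hG⟩ := (mem_span_range_iff_exists_fun ℂ).mp hv'
      rw [Fintype.sum_sum_type, Fintype.sum_sum_type] at hG
      simp only [hF, Sum.elim_inl, Sum.elim_inr] at hG
      set a : Fin r → ℂ := fun k => G (Sum.inl k)
      set u : Fin n → ℂ := fun j => (G (Sum.inr (Sum.inl j)) - Complex.I * G (Sum.inr (Sum.inr j)))/2
      set w : Fin n → ℂ := fun j => (G (Sum.inr (Sum.inl j)) + Complex.I * G (Sum.inr (Sum.inr j)))/2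
      have hv2 : ∑ k, a k • x k + ∑ j, u j • l j + ∑ j, w j • σ (l j) = v := by
        rw [← hG, ← Finset.sum_add_distrib, add_assoc, ← Finset.sum_add_distrib]
        congr 1
        apply Finset.sum_congr rfl
        intro j _
        rw [conj_comb]
      have hW0span : (∑ j, w j • σ (l j)) ∈ Submodule.span ℂ (Set.range x) := by
        rw [hxspan]
        constructor
        · have : (∑ j, w j • σ (l j)) = v - ∑ k, a k • x k - ∑ j, u j • l j := by
            linear_combination (norm := abel) hv2
          rw [this]
          exact sub_mem (sub_mem hv (Submodule.sum_mem _ fun k _ => smul_mem _ _ (hx_mem k)))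
            (Submodule.sum_mem _ fun j _ => smul_mem _ _ (hl j))
        · exact Submodule.sum_mem _ fun j _ => smul_mem _ _ (mem_map_of_mem (hl j))
      have hspanx : Submodule.span ℂ (Set.range x)
          ≤ Submodule.span ℂ (Set.range (Sum.elim x l : Fin r ⊕ Fin n → W)) := by
        apply span_mono
        rintro _ ⟨k, rfl⟩
        exact ⟨Sum.inl k, rfl⟩
      rw [← hv2]
      refine add_mem (add_mem ?_ ?_) (hspanx hW0span)
      · exact Submodule.sum_mem _ fun k _ => smul_mem _ _ (subset_span ⟨Sum.inl k, rfl⟩)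
      · exact Submodule.sum_mem _ fun j _ => smul_mem _ _ (subset_span ⟨Sum.inr j, rfl⟩)
  · rintro ⟨hI, hS⟩
    constructor
    · rw [Fintype.linearIndependent_iff]
      intro G hG
      rw [Fintype.sum_sum_type, Fintype.sum_sum_type] at hG
      simp only [hF, Sum.elim_inl, Sum.elim_inr] at hG
      set a : Fin r → ℂ := fun k => G (Sum.inl k) with ha
      set u : Fin n → ℂ := fun j => (G (Sum.inr (Sum.inl j)) - Complex.I * G (Sum.inr (Sum.inr j)))/2 with hu
      set w : Fin n → ℂ := fun j => (G (Sum.inr (Sum.inl j)) + Complex.I * G (Sum.inr (Sum.inr j)))/2 with hw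
      have h0 : ∑ k, a k • x k + ∑ j, u j • l j + ∑ j, w j • σ (l j) = 0 := by
        rw [← hG, ← Finset.sum_add_distrib, add_assoc, ← Finset.sum_add_distrib]
        congr 1
        apply Finset.sum_congr rfl
        intro j _
        rw [conj_comb]
      obtain ⟨ha0, hu0, hw0⟩ := conj_key σ hinv L hx hxspan hl hI a u w h0
      rintro (k | (j | j))
      · exact ha0 k
      · have h1 := hu0 j
        have h2 := hw0 j
        rw [hu] at h1
        rw [hw] at h2
        linear_combination h1 + h2
      · have h1 := hu0 j
        have h2 := hw0 j
        rw [hu] at h1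
        rw [hw] at h2
        linear_combination Complex.I * h1 - Complex.I * h2
          + (G (Sum.inr (Sum.inr j))) * Complex.I_mul_I
    · apply le_antisymm
      · rw [span_le]
        rintro _ ⟨(k | (j | j)), rfl⟩
        · exact le_sup_left (α := Submodule ℂ W) (hx_mem k)
        · simp only [hF, Sum.elim_inl, Sum.elim_inr]
          unfold conjRe
          exact smul_mem _ _ (add_mem (le_sup_left (α := Submodule ℂ W) (hl j))
            (le_sup_right (α := Submodule ℂ W) (mem_map_of_mem (hl j))))
        · simp only [hF, Sum.elim_inl, Sum.elim_inr]
          unfold conjIm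
          exact smul_mem _ _ (sub_mem (le_sup_left (α := Submodule ℂ W) (hl j))
            (le_sup_right (α := Submodule ℂ W) (mem_map_of_mem (hl j))))
      · have hxF : ∀ k, x k ∈ Submodule.span ℂ (Set.range F) :=
          fun k => subset_span ⟨Sum.inl k, rfl⟩
        have hlF : ∀ j, l j ∈ Submodule.span ℂ (Set.range F) := fun j => by
          rw [← conj_reIm σ (l j)]
          exact add_mem (subset_span ⟨Sum.inr (Sum.inl j), rfl⟩)
            (smul_mem _ _ (subset_span ⟨Sum.inr (Sum.inr j), rfl⟩))
        have hσlF : ∀ j, σ (l j) ∈ Submodule.span ℂ (Set.range F) := fun j => by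
          rw [← conj_reIm' σ (l j)]
          exact sub_mem (subset_span ⟨Sum.inr (Sum.inl j), rfl⟩)
            (smul_mem _ _ (subset_span ⟨Sum.inr (Sum.inr j), rfl⟩))
        apply sup_le
        · rw [← hS, span_le]
          rintro _ ⟨(k | j), rfl⟩
          · exact hxF k
          · exact hlF j
        · rw [← hS, Submodule.map_span, span_le]
          rintro _ ⟨_, ⟨(k | j), rfl⟩, rfl⟩
          · rw [Sum.elim_inl, hx]; exact hxF k
          · rw [Sum.elim_inr]; exact hσlF j
end

section
/- Let W be a complex vector space, σ a conjugate-linear involution on W, q, m, r, n ∈ ℕ, and ζ ∈ ℝ with 0 < ζ ≤ 1. Let x : Fin q → W with σ(x k) = x k for all k and l : Fin m → W. Let L := Submodule.span ℂ (Set.range x ∪ Set.range l), and assume Submodule.span ℂ (Set.range x) = L ⊓ Submodule.map σ L, finrank_ℂ(L ⊓ Submodule.map σ L) = r, and finrank_ℂ L = n + r. Fix K₀ : Fin r → Fin q and J₀ : Fin n → Fin m, and let T₀ : Fin (r + n) → W be the concatenated tuple (x ∘ K₀, l ∘ J₀). Assume: (a) T₀ is ℂ-linearly independent; and (b) for every r₁,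 n₁ with r₁ + n₁ = r + n, every K : Fin r₁ → Fin q, every J : Fin n₁ → Fin m, and every alternating ℂ-multilinear map φ : AlternatingMap ℂ W ℂ (Fin (r+n)), one has ‖φ(x ∘ K, l ∘ J)‖ ≤ ζ⁻¹ · ‖φ(T₀)‖ (applying φ to the concatenated tuple of length r₁ + n₁ = r + n). Then: (1) the real tuple B₀ : Fin (r + 2n) → W given by concatenating x ∘ K₀, (fun j => (2:ℂ) • Re(l (J₀ j))), and (fun j => (2:ℂ) • Im(l (J₀ j))) is linearly independent over ℝ (W regarded as a real vector space by restriction of scalars); and (2) letting w : Fin (q + 2m) → W be the concatenation of x, (fun j => (2:ℂ) • Re(l j)), and (fun j => (2:ℂ) • Im(l j)), for every P : Fin (r + 2n) → Fin (q + 2m) and every alternating ℝ-multilinear map ψ : AlternatingMap ℝ W ℝ (Fin (r+2n)) one has |ψ(w ∘ P)| ≤ (2 · ζ⁻¹ · Real.sqrt (r + 2n))^(r + 2n) · |ψ(B₀)|. -/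
open Submodule

/-!
Since `T₀` is a basis of `L`, Cramer's rule writes each `T₀`-coordinate of a generator `x k` or
`l j` as a quotient `⋀(T₀ with one slot replaced) / ⋀T₀`; up to a permutation (moving `l j` from
the `x`-block into the `l`-block) the numerator is one of the wedges bounded in the hypothesis, so
all coordinates have modulus at most `ζ⁻¹`. Splitting complex coordinates into real and imaginary
parts, `x k`, `2 Re (l j)` and `2 Im (l j)` get real coordinates of size at most `2 ζ⁻¹` in `B₀`,
and Hadamard's inequality bounds the determinant of the coordinate matrix of `w ∘ P` by
`(2 ζ⁻¹ √(r + 2n))^(r + 2n)`.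

Real independence of `B₀` reduces to complex independence of `(x ∘ K₀, l ∘ J₀, σ ∘ l ∘ J₀)`: a
vector of `span T₀ ∩ span (σ ∘ l ∘ J₀)` lies in `L ∩ σ L = span (x ∘ K₀)`, which `σ` preserves,
so applying `σ` lands it in `span (x ∘ K₀) ∩ span (l ∘ J₀) = 0`.
-/

namespace Fin

variable {α : Type*} {m n : ℕ}

theorem append_update_castAdd (a : Fin m → α) (b : Fin n → α) (s : Fin m) (z : α) :
    append (Function.update a s z) b = Function.update (append a b) (castAdd n s) z := by
  ext i
  induction i using addCases with
  | left i => simp [Function.update_apply]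
  | right j => simp [Function.update_apply, Fin.ext_iff]; omega

theorem append_update_natAdd (a : Fin m → α) (b : Fin n → α) (t : Fin n) (z : α) :
    append a (Function.update b t z) = Function.update (append a b) (natAdd m t) z := by
  ext i
  induction i using addCases with
  | left i => simp [Function.update_apply, Fin.ext_iff]; omega
  | right j => simp [Function.update_apply]

theorem append_comp_permCongr (a : Fin m → α) (b : Fin n → α) (π : Equiv.Perm (Fin m)) :
    append (a ∘ π) b = append a b ∘ finSumFinEquiv.permCongr (π.sumCongr 1) := by
  ext i
  induction i using addCases <;> simp [Equiv.permCongr_apply]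

theorem exists_perm_append_succAbove_cons {k : ℕ} (a : Fin (k + 1) → α) (b : Fin n → α)
    (s : Fin (k + 1)) (z : α) (h : k + (n + 1) = k + 1 + n) :
    ∃ π : Equiv.Perm (Fin (k + 1 + n)),
      append (a ∘ s.succAbove) (cons z b) ∘ Fin.cast h.symm =
        append (Function.update a s z) b ∘ π := by
  have hsnoc : snoc (a ∘ s.succAbove) z =
      Function.update a s z ∘ (s.cycleRange.symm * (last k).cycleRange) := by
    rw [← insertNth_removeNth, ← insertNth_last', Equiv.Perm.coe_mul, ← Function.comp_assoc,
      insertNth_comp_cycleRange_symm, cons_comp_cycleRange]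
    rfl
  refine ⟨finSumFinEquiv.permCongr ((s.cycleRange.symm * (last k).cycleRange).sumCongr 1), ?_⟩
  rw [append_right_cons, hsnoc, append_comp_permCongr]
  ext i
  simp

end Fin

theorem linearIndependent_fin_append_iff {R M : Type*} [Ring R] [AddCommGroup M] [Module R M]
    {m n : ℕ} {u : Fin m → M} {v : Fin n → M} :
    LinearIndependent R (Fin.append u v) ↔ LinearIndependent R u ∧ LinearIndependent R v ∧
      Disjoint (span R (Set.range u)) (span R (Set.range v)) := by
  rw [← linearIndependent_equiv finSumFinEquiv, linearIndependent_sum]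
  simp [Function.comp_def]

theorem LinearIndependent.span_eq_of_finrank_le {K V ι : Type*} [DivisionRing K] [AddCommGroup V]
    [Module K V] [Fintype ι] {v : ι → V} (hv : LinearIndependent K v) {S : Submodule K V}
    [FiniteDimensional K S] (hvS : ∀ i, v i ∈ S) (h : Module.finrank K S ≤ Fintype.card ι) :
    span K (Set.range v) = S :=
  eq_of_le_of_finrank_le (span_le.mpr (Set.range_subset_iff.mpr hvS))
    (by rwa [finrank_span_eq_card hv])

theorem AlternatingMap.map_update_sum_smul_self {R M N ι : Type*} [CommSemiring R]
    [AddCommMonoid M] [Module R M] [AddCommMonoid N] [Module R N] [Fintype ι] [DecidableEq ι]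
    (f : M [⋀^ι]→ₗ[R] N) (T : ι → M) (c : ι → R) (p : ι) :
    f (Function.update T p (∑ i, c i • T i)) = c p • f T := by
  rw [f.map_update_sum, Finset.sum_eq_single p]
  · rw [f.map_update_smul, Function.update_eq_self]
  · intro i _ hip
    rw [f.map_update_smul, f.map_update_self T hip.symm, smul_zero]
  · simp

theorem LinearIndependent.exists_alternatingMap_apply_eq_one {K M ι : Type*} [Field K]
    [AddCommGroup M] [Module K M] [Fintype ι] [DecidableEq ι] {T : ι → M}
    (hT : LinearIndependent K T) : ∃ φ : M [⋀^ι]→ₗ[K] K, φ T = 1 := by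
  obtain ⟨Q, hQ⟩ := (span K (Set.range T)).exists_isCompl
  set π := (span K (Set.range T)).projectionOnto Q hQ
  have hπT : π ∘ T = Module.Basis.span hT := by
    ext i
    simp [π, Module.Basis.span_apply, projectionOnto_apply_left hQ ⟨T i, subset_span ⟨i, rfl⟩⟩]
  refine ⟨(Module.Basis.span hT).det.compLinearMap π, ?_⟩
  change (Module.Basis.span hT).det (π ∘ T) = 1
  rw [hπT, Module.Basis.det_self]

theorem AlternatingMap.map_sum_smul_eq_det_mul {R M ι : Type*} [CommRing R] [AddCommGroup M]
    [Module R M] [Fintype ι] [DecidableEq ι] (ψ : M [⋀^ι]→ₗ[R] R) (b : ι → M)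
    (G : Matrix ι ι R) : ψ (fun i => ∑ p, G i p • b p) = G.det * ψ b := by
  set ψ' := ψ.compLinearMap (Fintype.linearCombination R b)
  have hb : ψ' (Pi.basisFun R ι) = ψ b := by
    simp [ψ', AlternatingMap.compLinearMap_apply]
  calc ψ (fun i => ∑ p, G i p • b p) = ψ' (fun i => G i) := rfl
    _ = G.det * ψ b := by
        rw [ψ'.eq_smul_basis_det (Pi.basisFun R ι), AlternatingMap.smul_apply,
          Pi.basisFun_det_apply, hb, smul_eq_mul, mul_comm]
        rfl

theorem Matrix.abs_det_le_of_abs_le {N : ℕ} (A : Matrix (Fin N) (Fin N) ℝ) {c : ℝ} (hc : 0 ≤ c)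
    (h : ∀ i j, |A i j| ≤ c) : |A.det| ≤ (Real.sqrt N * c) ^ N := by
  -- Hadamard's inequality for the rows of `A`, through the volume form of `EuclideanSpace`.
  set E := EuclideanSpace ℝ (Fin N)
  have : Fact (Module.finrank ℝ E = N) := ⟨finrank_euclideanSpace_fin⟩
  set b := EuclideanSpace.basisFun (Fin N) ℝ
  set v : Fin N → E := fun i => WithLp.toLp 2 (A i)
  have hdet : b.toBasis.det v = A.det := by
    rw [Module.Basis.det_apply, ← Matrix.det_transpose]
    congr
  have hnorm : ∀ i, ‖v i‖ ≤ Real.sqrt N * c := by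
    intro i
    rw [EuclideanSpace.norm_eq, ← Real.sqrt_sq hc, ← Real.sqrt_mul (Nat.cast_nonneg N)]
    gcongr
    calc ∑ j, ‖A i j‖ ^ 2 ≤ ∑ _j : Fin N, c ^ 2 := by gcongr with j; simpa using h i j
      _ = N * c ^ 2 := by simp
  calc |A.det| ≤ ∏ i, ‖v i‖ := by
        rw [← hdet, ← (b.toBasis.orientation).volumeForm_robust b rfl]
        exact Orientation.abs_volumeForm_apply_le _ v
    _ ≤ ∏ _i : Fin N, (Real.sqrt N * c) :=
        Finset.prod_le_prod (fun i _ => norm_nonneg _) fun i _ => hnorm i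
    _ = (Real.sqrt N * c) ^ N := by simp

theorem AlternatingMap.abs_map_le_of_forall_eq_sum {M : Type*} [AddCommGroup M] [Module ℝ M]
    {N : ℕ} (ψ : M [⋀^Fin N]→ₗ[ℝ] ℝ) {b v : Fin N → M} {c : ℝ}
    (hv : ∀ i, ∃ g : Fin N → ℝ, (∀ p, |g p| ≤ c) ∧ v i = ∑ p, g p • b p) (hc : 0 ≤ c) :
    |ψ v| ≤ (Real.sqrt N * c) ^ N * |ψ b| := by
  choose G hG hvG using hv
  calc |ψ v| = |(Matrix.of G).det| * |ψ b| := by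
        rw [funext hvG, ← abs_mul]
        exact congrArg _ (ψ.map_sum_smul_eq_det_mul b (Matrix.of G))
    _ ≤ (Real.sqrt N * c) ^ N * |ψ b| := by
        gcongr
        exact Matrix.abs_det_le_of_abs_le _ hc hG

/-- The paper's `|⋀u / ⋀T| ≤ C`, tested against every alternating form. -/
def WedgeDominated (𝕜 : Type*) {M ι : Type*} [NormedField 𝕜] [AddCommGroup M] [Module 𝕜 M]
    (u T : ι → M) (C : ℝ) : Prop :=
  ∀ φ : M [⋀^ι]→ₗ[𝕜] 𝕜, ‖φ u‖ ≤ C * ‖φ T‖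

section WedgeDominated

variable {𝕜 M ι : Type*} [NormedField 𝕜] [AddCommGroup M] [Module 𝕜 M] [Fintype ι] [DecidableEq ι]

theorem wedgeDominated_comp_perm_iff {u T : ι → M} {C : ℝ} (π : Equiv.Perm ι) :
    WedgeDominated 𝕜 (u ∘ π) T C ↔ WedgeDominated 𝕜 u T C := by
  simp [WedgeDominated, AlternatingMap.map_perm]

theorem WedgeDominated.norm_coeff_le {T : ι → M} (hT : LinearIndependent 𝕜 T) {c : ι → 𝕜}
    {p : ι} {C : ℝ} (h : WedgeDominated 𝕜 (Function.update T p (∑ i, c i • T i)) T C) :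
    ‖c p‖ ≤ C := by
  obtain ⟨φ, hφ⟩ := hT.exists_alternatingMap_apply_eq_one
  simpa [φ.map_update_sum_smul_self, hφ] using h φ

end WedgeDominated

theorem real_smul_two_smul {W : Type*} [AddCommGroup W] [Module ℂ W] (t : ℝ) (v : W) :
    t • (2 : ℂ) • v = (2 * t) • v := by
  rw [← Complex.coe_smul, ← Complex.coe_smul, smul_smul]
  push_cast
  ring_nf

section Conj

variable {W : Type*} [AddCommGroup W] [Module ℂ W] (σ : W →ₛₗ[starRingEnd ℂ] W)

theorem two_smul_conjRe (v : W) : (2 : ℂ) • conjRe σ v = v + σ v := by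
  rw [conjRe, smul_smul]; norm_num

theorem two_smul_conjIm (v : W) : (2 : ℂ) • conjIm σ v = -Complex.I • (v - σ v) := by
  rw [conjIm, smul_smul]; ring_nf

theorem conjRe_of_apply_eq {v : W} (hv : σ v = v) : conjRe σ v = v := by
  rw [conjRe, hv, ← two_smul ℂ, smul_smul]; norm_num

theorem conjIm_of_apply_eq {v : W} (hv : σ v = v) : conjIm σ v = 0 := by
  rw [conjIm, hv, sub_self, smul_zero]

theorem conjRe_sum {ι : Type*} (s : Finset ι) (f : ι → W) :
    conjRe σ (∑ i ∈ s, f i) = ∑ i ∈ s, conjRe σ (f i) := by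
  simp [conjRe, map_sum, Finset.sum_add_distrib, Finset.smul_sum]

theorem conjIm_sum {ι : Type*} (s : Finset ι) (f : ι → W) :
    conjIm σ (∑ i ∈ s, f i) = ∑ i ∈ s, conjIm σ (f i) := by
  rw [conjIm, map_sum, ← Finset.sum_sub_distrib, Finset.smul_sum]
  rfl

theorem two_smul_conjRe_smul (c : ℂ) (v : W) :
    (2 : ℂ) • conjRe σ (c • v) = c.re • ((2 : ℂ) • conjRe σ v) - c.im • ((2 : ℂ) • conjIm σ v) := by
  rw [two_smul_conjRe, two_smul_conjIm, two_smul_conjRe, σ.map_smulₛₗ, ← Complex.coe_smul,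
    ← Complex.coe_smul]
  conv_lhs => rw [← Complex.re_add_im c]
  simp only [map_add, Complex.conj_ofReal, map_mul, Complex.conj_I]
  match_scalars <;> ring

theorem two_smul_conjIm_smul (c : ℂ) (v : W) :
    (2 : ℂ) • conjIm σ (c • v) = c.im • ((2 : ℂ) • conjRe σ v) + c.re • ((2 : ℂ) • conjIm σ v) := by
  rw [two_smul_conjRe, two_smul_conjIm, two_smul_conjIm, σ.map_smulₛₗ, ← Complex.coe_smul,
    ← Complex.coe_smul]
  conv_lhs => rw [← Complex.re_add_im c]
  simp only [map_add, Complex.conj_ofReal, map_mul, Complex.conj_I]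
  match_scalars <;> ring_nf <;> simp [Complex.I_sq]

variable {r n : ℕ}

noncomputable def reImTuple (a : Fin r → W) (b : Fin n → W) : Fin (r + n + n) → W :=
  Fin.append (Fin.append a fun j => (2 : ℂ) • conjRe σ (b j)) fun j => (2 : ℂ) • conjIm σ (b j)

theorem sum_smul_reImTuple {R : Type*} [Semiring R] [Module R W] (a : Fin r → W) (b : Fin n → W)
    (α : Fin r → R) (β γ : Fin n → R) :
    ∑ p, Fin.append (Fin.append α β) γ p • reImTuple σ a b p =
      ∑ s, α s • a s + ∑ t, β t • (2 : ℂ) • conjRe σ (b t) +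
        ∑ t, γ t • (2 : ℂ) • conjIm σ (b t) := by
  simp [reImTuple, Fin.sum_univ_add]

variable {σ}

theorem two_smul_conjRe_sum_append {a : Fin r → W} (ha : ∀ s, σ (a s) = a s) (b : Fin n → W)
    (c : Fin (r + n) → ℂ) :
    (2 : ℂ) • conjRe σ (∑ i, c i • Fin.append a b i) =
      ∑ p, Fin.append (Fin.append (fun s => 2 * (c (Fin.castAdd n s)).re)
        (fun t => (c (Fin.natAdd r t)).re)) (fun t => -(c (Fin.natAdd r t)).im) p •
        reImTuple σ a b p := by
  rw [sum_smul_reImTuple, conjRe_sum, Finset.smul_sum, Fin.sum_univ_add]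
  simp [two_smul_conjRe_smul, conjRe_of_apply_eq, conjIm_of_apply_eq, ha, real_smul_two_smul,
    sub_eq_add_neg, add_assoc, Finset.sum_add_distrib]

theorem two_smul_conjIm_sum_append {a : Fin r → W} (ha : ∀ s, σ (a s) = a s) (b : Fin n → W)
    (c : Fin (r + n) → ℂ) :
    (2 : ℂ) • conjIm σ (∑ i, c i • Fin.append a b i) =
      ∑ p, Fin.append (Fin.append (fun s => 2 * (c (Fin.castAdd n s)).im)
        (fun t => (c (Fin.natAdd r t)).im)) (fun t => (c (Fin.natAdd r t)).re) p •
        reImTuple σ a b p := by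
  rw [sum_smul_reImTuple, conjIm_sum, Finset.smul_sum, Fin.sum_univ_add]
  simp [two_smul_conjIm_smul, conjRe_of_apply_eq, conjIm_of_apply_eq, ha, real_smul_two_smul,
    add_assoc, Finset.sum_add_distrib]

theorem abs_append_append_le {α : Fin r → ℝ} {β γ : Fin n → ℝ} {C : ℝ} (hα : ∀ s, |α s| ≤ C)
    (hβ : ∀ t, |β t| ≤ C) (hγ : ∀ t, |γ t| ≤ C) (p : Fin (r + n + n)) :
    |Fin.append (Fin.append α β) γ p| ≤ C := by
  induction p using Fin.addCases with
  | left p => induction p using Fin.addCases <;> simp [*]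
  | right t => simp [*]

theorem exists_two_smul_conjRe_eq_sum {a : Fin r → W} (ha : ∀ s, σ (a s) = a s) (b : Fin n → W)
    {c : Fin (r + n) → ℂ} {C : ℝ} (hc : ∀ i, ‖c i‖ ≤ C) :
    ∃ g : Fin (r + n + n) → ℝ, (∀ p, |g p| ≤ 2 * C) ∧
      (2 : ℂ) • conjRe σ (∑ i, c i • Fin.append a b i) = ∑ p, g p • reImTuple σ a b p := by
  refine ⟨_, abs_append_append_le (fun s => ?_) (fun t => ?_) (fun t => ?_),
    two_smul_conjRe_sum_append ha b c⟩
  · have := Complex.abs_re_le_norm (c (Fin.castAdd n s))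
    rw [abs_mul, abs_two]
    linarith [hc (Fin.castAdd n s)]
  · linarith [Complex.abs_re_le_norm (c (Fin.natAdd r t)), hc (Fin.natAdd r t),
      norm_nonneg (c (Fin.natAdd r t))]
  · rw [abs_neg]
    linarith [Complex.abs_im_le_norm (c (Fin.natAdd r t)), hc (Fin.natAdd r t),
      norm_nonneg (c (Fin.natAdd r t))]

theorem exists_two_smul_conjIm_eq_sum {a : Fin r → W} (ha : ∀ s, σ (a s) = a s) (b : Fin n → W)
    {c : Fin (r + n) → ℂ} {C : ℝ} (hc : ∀ i, ‖c i‖ ≤ C) :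
    ∃ g : Fin (r + n + n) → ℝ, (∀ p, |g p| ≤ 2 * C) ∧
      (2 : ℂ) • conjIm σ (∑ i, c i • Fin.append a b i) = ∑ p, g p • reImTuple σ a b p := by
  refine ⟨_, abs_append_append_le (fun s => ?_) (fun t => ?_) (fun t => ?_),
    two_smul_conjIm_sum_append ha b c⟩
  · have := Complex.abs_im_le_norm (c (Fin.castAdd n s))
    rw [abs_mul, abs_two]
    linarith [hc (Fin.castAdd n s)]
  · linarith [Complex.abs_im_le_norm (c (Fin.natAdd r t)), hc (Fin.natAdd r t),
      norm_nonneg (c (Fin.natAdd r t))]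
  · linarith [Complex.abs_re_le_norm (c (Fin.natAdd r t)), hc (Fin.natAdd r t),
      norm_nonneg (c (Fin.natAdd r t))]

theorem exists_reImTuple_eq_sum {q m : ℕ} {x : Fin q → W} {l : Fin m → W} {a : Fin r → W}
    {b : Fin n → W} (hx : ∀ k, σ (x k) = x k) (ha : ∀ s, σ (a s) = a s) {C : ℝ} (hC : 0 ≤ C)
    (hxc : ∀ k, ∃ c : Fin (r + n) → ℂ, (∀ i, ‖c i‖ ≤ C) ∧ x k = ∑ i, c i • Fin.append a b i)
    (hlc : ∀ j, ∃ c : Fin (r + n) → ℂ, (∀ i, ‖c i‖ ≤ C) ∧ l j = ∑ i, c i • Fin.append a b i)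
    (i : Fin (q + m + m)) :
    ∃ g : Fin (r + n + n) → ℝ, (∀ p, |g p| ≤ 2 * C) ∧
      reImTuple σ x l i = ∑ p, g p • reImTuple σ a b p := by
  induction i using Fin.addCases with
  | left i =>
    induction i using Fin.addCases with
    | left k =>
      -- `x k` is `σ`-fixed, hence half of its own `2 Re`.
      obtain ⟨c, hc, hk⟩ := hxc k
      obtain ⟨g, hg, hsum⟩ := exists_two_smul_conjRe_eq_sum ha b hc
      refine ⟨(2⁻¹ : ℝ) • g, fun p => ?_, ?_⟩
      · have := hg p
        rw [Pi.smul_apply, smul_eq_mul, abs_mul, abs_of_pos (by norm_num)]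
        linarith
      · calc reImTuple σ x l (Fin.castAdd m (Fin.castAdd m k))
            = (2⁻¹ : ℝ) • (2 : ℂ) • conjRe σ (x k) := by
              rw [conjRe_of_apply_eq σ (hx k), real_smul_two_smul]
              simp [reImTuple]
          _ = ∑ p, ((2⁻¹ : ℝ) • g) p • reImTuple σ a b p := by
              rw [hk, hsum, Finset.smul_sum]
              simp [smul_smul]
    | right j =>
      obtain ⟨c, hc, hj⟩ := hlc j
      simpa [reImTuple, hj] using exists_two_smul_conjRe_eq_sum ha b hc
  | right j =>
    obtain ⟨c, hc, hj⟩ := hlc j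
    simpa [reImTuple, hj] using exists_two_smul_conjIm_eq_sum ha b hc

theorem linearIndependent_append_comp_conj (hinv : ∀ w, σ (σ w) = w) {a : Fin r → W}
    {b : Fin n → W} (ha : ∀ s, σ (a s) = a s) (hab : LinearIndependent ℂ (Fin.append a b))
    (hspan : span ℂ (Set.range (Fin.append a b)) ⊓ (span ℂ (Set.range (Fin.append a b))).map σ ≤
      span ℂ (Set.range a)) :
    LinearIndependent ℂ (Fin.append (Fin.append a b) (σ ∘ b)) := by
  obtain ⟨-, hb, hdisj⟩ := linearIndependent_fin_append_iff.mp hab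
  have hσinj : Function.Injective σ := Function.LeftInverse.injective hinv
  have hσb : LinearIndependent ℂ (σ ∘ b) :=
    hb.map_of_injective_injectiveₛ (starRingEnd ℂ) σ.toAddMonoidHom star_injective hσinj
      fun c v => by simp
  have hσa : (span ℂ (Set.range a)).map σ = span ℂ (Set.range a) := by
    rw [map_span, ← Set.range_comp, show ⇑σ ∘ a = a from funext ha]
  refine linearIndependent_fin_append_iff.mpr ⟨hab, hσb, Submodule.disjoint_def.mpr ?_⟩
  intro v hv hvσ
  rw [Set.range_comp, ← map_span] at hvσ
  have hva : v ∈ span ℂ (Set.range a) := hspan ⟨hv, map_mono (span_mono (by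
    rintro _ ⟨t, rfl⟩; exact ⟨Fin.natAdd r t, by simp⟩)) hvσ⟩
  obtain ⟨u, hu, rfl⟩ := hvσ
  rw [← hσa] at hva
  obtain ⟨u', hu', hu'u⟩ := hva
  rw [hσinj hu'u] at hu'
  rw [Submodule.disjoint_def.mp hdisj u hu' hu, map_zero]

theorem linearIndependent_reImTuple {a : Fin r → W} {b : Fin n → W}
    (h : LinearIndependent ℂ (Fin.append (Fin.append a b) (σ ∘ b))) :
    LinearIndependent ℝ (reImTuple σ a b) := by
  refine LinearIndependent.restrict_scalars' (K := ℂ) ℝ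
    (Fintype.linearIndependent_iff.mpr fun g hg => ?_)
  set α := fun s => g (Fin.castAdd n (Fin.castAdd n s))
  set β := fun t => g (Fin.castAdd n (Fin.natAdd r t))
  set γ := fun t => g (Fin.natAdd (r + n) t)
  -- `β (b + σ b) + γ (-I) (b - σ b) = (β - I γ) b + (β + I γ) σ b`
  have hrel : ∑ p, Fin.append (Fin.append α fun t => β t - Complex.I * γ t)
      (fun t => β t + Complex.I * γ t) p •
      Fin.append (Fin.append a b) (σ ∘ b) p = 0 := by
    rw [← hg]
    simp only [Fin.sum_univ_add, reImTuple, Fin.append_left, Fin.append_right, two_smul_conjRe,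
      two_smul_conjIm, Function.comp_apply]
    rw [add_assoc, add_assoc, ← Finset.sum_add_distrib, ← Finset.sum_add_distrib]
    congr 1
    refine Finset.sum_congr rfl fun t _ => ?_
    module
  have h0 := Fintype.linearIndependent_iff.mp h _ hrel
  intro p
  induction p using Fin.addCases with
  | left p =>
    induction p using Fin.addCases with
    | left s => simpa using h0 (Fin.castAdd n (Fin.castAdd n s))
    | right t =>
      have h1 := h0 (Fin.castAdd n (Fin.natAdd r t))
      have h2 := h0 (Fin.natAdd (r + n) t)
      simp only [Fin.append_left, Fin.append_right] at h1 h2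
      linear_combination (h1 + h2) / 2
  | right t =>
    have h1 := h0 (Fin.castAdd n (Fin.natAdd r t))
    have h2 := h0 (Fin.natAdd (r + n) t)
    simp only [Fin.append_left, Fin.append_right] at h1 h2
    linear_combination (-Complex.I / 2) * (h2 - h1) + γ t * Complex.I_sq

end Conj

section Coefficients

variable {W : Type*} [AddCommGroup W] [Module ℂ W] {q m r n : ℕ} {x : Fin q → W} {l : Fin m → W}
  {K₀ : Fin r → Fin q} {J₀ : Fin n → Fin m} {C : ℝ}

theorem norm_coeff_castAdd_le (hT : LinearIndependent ℂ (Fin.append (x ∘ K₀) (l ∘ J₀)))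
    (hb : ∀ (r₁ n₁ : ℕ) (h : r₁ + n₁ = r + n) (K : Fin r₁ → Fin q) (J : Fin n₁ → Fin m),
      WedgeDominated ℂ (Fin.append (x ∘ K) (l ∘ J) ∘ Fin.cast h.symm)
        (Fin.append (x ∘ K₀) (l ∘ J₀)) C)
    {v : W} (hv : v ∈ Set.range x ∪ Set.range l) {c : Fin (r + n) → ℂ}
    (hc : v = ∑ i, c i • Fin.append (x ∘ K₀) (l ∘ J₀) i) (s : Fin r) :
    ‖c (Fin.castAdd n s)‖ ≤ C := by
  refine WedgeDominated.norm_coeff_le hT ?_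
  rw [← hc, ← Fin.append_update_castAdd]
  rcases hv with ⟨k, rfl⟩ | ⟨j, rfl⟩
  · simpa [Function.comp_update] using hb r n rfl (Function.update K₀ s k) J₀
  · -- Moving `l j` into the `l`-block permutes the tuple, which only changes the sign of a wedge.
    obtain ⟨k, rfl⟩ : ∃ k, r = k + 1 := Nat.exists_eq_succ_of_ne_zero s.pos.ne'
    obtain ⟨π, hπ⟩ := Fin.exists_perm_append_succAbove_cons (x ∘ K₀) (l ∘ J₀) s (l j) (by omega)
    have := hb k (n + 1) (by omega) (K₀ ∘ s.succAbove) (Fin.cons j J₀)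
    rwa [Fin.comp_cons, ← Function.comp_assoc, hπ, wedgeDominated_comp_perm_iff] at this

theorem norm_coeff_natAdd_le (hT : LinearIndependent ℂ (Fin.append (x ∘ K₀) (l ∘ J₀)))
    (hb : ∀ (J : Fin n → Fin m),
      WedgeDominated ℂ (Fin.append (x ∘ K₀) (l ∘ J)) (Fin.append (x ∘ K₀) (l ∘ J₀)) C)
    {j : Fin m} {c : Fin (r + n) → ℂ} (hc : l j = ∑ i, c i • Fin.append (x ∘ K₀) (l ∘ J₀) i)
    (t : Fin n) : ‖c (Fin.natAdd r t)‖ ≤ C := by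
  refine WedgeDominated.norm_coeff_le hT ?_
  rw [← hc, ← Fin.append_update_natAdd, ← Function.comp_update]
  exact hb _

theorem exists_bounded_coeff_of_mem_span_left
    (hT : LinearIndependent ℂ (Fin.append (x ∘ K₀) (l ∘ J₀)))
    (hb : ∀ (r₁ n₁ : ℕ) (h : r₁ + n₁ = r + n) (K : Fin r₁ → Fin q) (J : Fin n₁ → Fin m),
      WedgeDominated ℂ (Fin.append (x ∘ K) (l ∘ J) ∘ Fin.cast h.symm)
        (Fin.append (x ∘ K₀) (l ∘ J₀)) C)
    (hC : 0 ≤ C) {k : Fin q} (hk : x k ∈ span ℂ (Set.range (x ∘ K₀))) :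
    ∃ c : Fin (r + n) → ℂ, (∀ i, ‖c i‖ ≤ C) ∧ x k = ∑ i, c i • Fin.append (x ∘ K₀) (l ∘ J₀) i := by
  obtain ⟨a, ha⟩ := (mem_span_range_iff_exists_fun ℂ).mp hk
  have hsum : x k = ∑ i, Fin.append a 0 i • Fin.append (x ∘ K₀) (l ∘ J₀) i := by
    simp [Fin.sum_univ_add, ← ha]
  refine ⟨_, fun i => ?_, hsum⟩
  induction i using Fin.addCases with
  | left s => exact norm_coeff_castAdd_le hT hb (Or.inl ⟨k, rfl⟩) hsum s
  | right t => simpa using hC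

theorem exists_bounded_coeff_of_mem_span
    (hT : LinearIndependent ℂ (Fin.append (x ∘ K₀) (l ∘ J₀)))
    (hb : ∀ (r₁ n₁ : ℕ) (h : r₁ + n₁ = r + n) (K : Fin r₁ → Fin q) (J : Fin n₁ → Fin m),
      WedgeDominated ℂ (Fin.append (x ∘ K) (l ∘ J) ∘ Fin.cast h.symm)
        (Fin.append (x ∘ K₀) (l ∘ J₀)) C)
    {j : Fin m} (hj : l j ∈ span ℂ (Set.range (Fin.append (x ∘ K₀) (l ∘ J₀)))) :
    ∃ c : Fin (r + n) → ℂ, (∀ i, ‖c i‖ ≤ C) ∧ l j = ∑ i, c i • Fin.append (x ∘ K₀) (l ∘ J₀) i := by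
  obtain ⟨c, hc⟩ := (mem_span_range_iff_exists_fun ℂ).mp hj
  refine ⟨c, fun i => ?_, hc.symm⟩
  induction i using Fin.addCases with
  | left s => exact norm_coeff_castAdd_le hT hb (Or.inr ⟨j, rfl⟩) hc.symm s
  | right t => exact norm_coeff_natAdd_le hT (fun J => by simpa using hb r n rfl K₀ J) hc.symm t

end Coefficients

theorem wedge_quotient_complex_to_real_general
    (W : Type*) [AddCommGroup W] [Module ℂ W]
    (σ : W →ₛₗ[starRingEnd ℂ] W) (hinv : ∀ w : W, σ (σ w) = w)
    (q m r n : ℕ) (ζ : ℝ) (hζ0 : 0 < ζ)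
    (x : Fin q → W) (hx : ∀ k, σ (x k) = x k) (l : Fin m → W)
    (L : Submodule ℂ W) (hL : L = Submodule.span ℂ (Set.range x ∪ Set.range l))
    (hX : Submodule.span ℂ (Set.range x) = L ⊓ Submodule.map σ L)
    (hr : Module.finrank ℂ ↥(L ⊓ Submodule.map σ L) = r)
    (hnr : Module.finrank ℂ ↥L = n + r)
    (K₀ : Fin r → Fin q) (J₀ : Fin n → Fin m)
    (T₀ : Fin (r + n) → W) (hT₀ : T₀ = Fin.append (x ∘ K₀) (l ∘ J₀))
    (ha : LinearIndependent ℂ T₀)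
    (hb : ∀ (r₁ n₁ : ℕ) (h : r₁ + n₁ = r + n) (K : Fin r₁ → Fin q) (J : Fin n₁ → Fin m)
      (φ : W [⋀^Fin (r + n)]→ₗ[ℂ] ℂ),
      ‖φ (fun i => Fin.append (x ∘ K) (l ∘ J) (Fin.cast h.symm i))‖ ≤ ζ⁻¹ * ‖φ T₀‖)
    (B₀ : Fin (r + n + n) → W)
    (hB₀ : B₀ = Fin.append
      (Fin.append (x ∘ K₀) (fun j => (2 : ℂ) • conjRe σ (l (J₀ j))))
      (fun j => (2 : ℂ) • conjIm σ (l (J₀ j))))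
    (w : Fin (q + m + m) → W)
    (hw : w = Fin.append
      (Fin.append x (fun j => (2 : ℂ) • conjRe σ (l j)))
      (fun j => (2 : ℂ) • conjIm σ (l j))) :
    LinearIndependent ℝ B₀ ∧
      ∀ (P : Fin (r + n + n) → Fin (q + m + m)) (ψ : W [⋀^Fin (r + n + n)]→ₗ[ℝ] ℝ),
        |ψ (w ∘ P)| ≤
          (2 * ζ⁻¹ * Real.sqrt ((r + n + n : ℕ) : ℝ)) ^ (r + n + n) * |ψ B₀| := by
  subst hT₀ hB₀ hw
  have hζ : 0 ≤ ζ⁻¹ := inv_nonneg.mpr hζ0.le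
  have hgenL : Set.range x ∪ Set.range l ⊆ L := hL ▸ subset_span
  have : FiniteDimensional ℂ L :=
    hL ▸ FiniteDimensional.span_of_finite ℂ ((Set.finite_range x).union (Set.finite_range l))
  have : FiniteDimensional ℂ (span ℂ (Set.range x)) :=
    FiniteDimensional.span_of_finite ℂ (Set.finite_range x)
  have hspanT : span ℂ (Set.range (Fin.append (x ∘ K₀) (l ∘ J₀))) = L := by
    refine ha.span_eq_of_finrank_le (fun i => hgenL ?_) (by simp [hnr, add_comm])
    induction i using Fin.addCases <;> simp
  have hspanX : span ℂ (Set.range (x ∘ K₀)) = span ℂ (Set.range x) :=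
    (linearIndependent_fin_append_iff.mp ha).1.span_eq_of_finrank_le
      (fun s => subset_span ⟨K₀ s, rfl⟩) (by rw [hX, hr, Fintype.card_fin])
  have hcx := fun k => exists_bounded_coeff_of_mem_span_left ha hb hζ
    (by rw [hspanX]; exact subset_span ⟨k, rfl⟩)
  have hcl := fun j => exists_bounded_coeff_of_mem_span ha hb
    (by rw [hspanT]; exact hgenL (Or.inr ⟨j, rfl⟩))
  refine ⟨?_, fun P ψ => ?_⟩
  · exact linearIndependent_reImTuple (b := l ∘ J₀)
      (linearIndependent_append_comp_conj hinv (fun s => hx _) ha (by rw [hspanT, hspanX, hX]))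
  · rw [mul_comm (2 * ζ⁻¹)]
    exact ψ.abs_map_le_of_forall_eq_sum
      (fun i => exists_reImTuple_eq_sum hx (fun s => hx _) hζ hcx hcl (P i)) (by positivity)

/-- Proposition on quotients of wedge products, complex ⇒ real direction.
If the concatenated tuple `T₀ = (x ∘ K₀, l ∘ J₀)` is ℂ-linearly independent and every
alternating ℂ-multilinear form satisfies the bound `‖φ(x∘K, l∘J)‖ ≤ ζ⁻¹ ‖φ(T₀)‖` for all
concatenations of total length `r + n`, then the real tuple
`B₀ = (x∘K₀, 2 Re(l∘J₀), 2 Im(l∘J₀))` is ℝ-linearly independent and every alternating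
ℝ-multilinear form `ψ` satisfies
`|ψ(w ∘ P)| ≤ (2 ζ⁻¹ √(r+2n))^(r+2n) |ψ(B₀)|` for all `P`. -/
theorem wedge_quotient_complex_to_real
    (W : Type*) [AddCommGroup W] [Module ℂ W]
    (σ : W →ₛₗ[starRingEnd ℂ] W) (hinv : ∀ w : W, σ (σ w) = w)
    (q m r n : ℕ) (ζ : ℝ) (hζ0 : 0 < ζ) (hζ1 : ζ ≤ 1)
    (x : Fin q → W) (hx : ∀ k, σ (x k) = x k) (l : Fin m → W)
    (L : Submodule ℂ W) (hL : L = Submodule.span ℂ (Set.range x ∪ Set.range l))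
    (hX : Submodule.span ℂ (Set.range x) = L ⊓ Submodule.map σ L)
    (hr : Module.finrank ℂ ↥(L ⊓ Submodule.map σ L) = r)
    (hnr : Module.finrank ℂ ↥L = n + r)
    (K₀ : Fin r → Fin q) (J₀ : Fin n → Fin m)
    (T₀ : Fin (r + n) → W) (hT₀ : T₀ = Fin.append (x ∘ K₀) (l ∘ J₀))
    (ha : LinearIndependent ℂ T₀)
    (hb : ∀ (r₁ n₁ : ℕ) (h : r₁ + n₁ = r + n) (K : Fin r₁ → Fin q) (J : Fin n₁ → Fin m)
      (φ : W [⋀^Fin (r + n)]→ₗ[ℂ] ℂ),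
      ‖φ (fun i => Fin.append (x ∘ K) (l ∘ J) (Fin.cast h.symm i))‖ ≤ ζ⁻¹ * ‖φ T₀‖)
    (B₀ : Fin (r + n + n) → W)
    (hB₀ : B₀ = Fin.append
      (Fin.append (x ∘ K₀) (fun j => (2 : ℂ) • conjRe σ (l (J₀ j))))
      (fun j => (2 : ℂ) • conjIm σ (l (J₀ j))))
    (w : Fin (q + m + m) → W)
    (hw : w = Fin.append
      (Fin.append x (fun j => (2 : ℂ) • conjRe σ (l j)))
      (fun j => (2 : ℂ) • conjIm σ (l j))) :
    LinearIndependent ℝ B₀ ∧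
      ∀ (P : Fin (r + n + n) → Fin (q + m + m)) (ψ : W [⋀^Fin (r + n + n)]→ₗ[ℝ] ℝ),
        |ψ (w ∘ P)| ≤
          (2 * ζ⁻¹ * Real.sqrt ((r + n + n : ℕ) : ℝ)) ^ (r + n + n) * |ψ B₀| :=
  wedge_quotient_complex_to_real_general W σ hinv q m r n ζ hζ0 x hx l L hL hX hr hnr K₀ J₀ T₀ hT₀
    ha hb B₀ hB₀ w hw
end

section
/- Let n ∈ ℕ and r ≥ 0 a real number. For f : MvPowerSeries (Fin n) ℂ write N(f) for the sum ∑' (α : (Fin n) →₀ ℕ), ‖MvPowerSeries.coeff ℂ α f‖ · r ^ (α.sum fun _ k => k). If the families defining N(f) and N(g) are both summable, then the family defining N(f * g) is summable and N(f * g) ≤ N(f) · N(g). -/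
/-! Since the weight `r ^ |α|` is multiplicative, the weighted norm of the `α`-th coefficient of
`f * g` is at most the `α`-th term of the Cauchy product of the weighted coefficient families of
`f` and `g`, and the Cauchy product of two nonnegative summable families sums to the product of
their sums. -/

open Finset

section WeightedCauchyProduct

variable {A : Type*} [AddCommMonoid A] [HasAntidiagonal A] {F G H : A → ℝ}

theorem summable_of_le_sum_antidiagonal (hF₀ : 0 ≤ F) (hG₀ : 0 ≤ G) (hH₀ : 0 ≤ H)
    (hF : Summable F) (hG : Summable G)
    (hH : ∀ α, H α ≤ ∑ p ∈ antidiagonal α, F p.1 * G p.2) :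
    Summable H :=
  (summable_sum_mul_antidiagonal_of_summable_mul (hF.mul_of_nonneg hG hF₀ hG₀)).of_nonneg_of_le
    hH₀ hH

theorem tsum_le_tsum_mul_tsum_of_le_sum_antidiagonal (hF₀ : 0 ≤ F) (hG₀ : 0 ≤ G) (hH₀ : 0 ≤ H)
    (hF : Summable F) (hG : Summable G)
    (hH : ∀ α, H α ≤ ∑ p ∈ antidiagonal α, F p.1 * G p.2) :
    ∑' α, H α ≤ (∑' α, F α) * ∑' α, G α := by
  have hFG := hF.mul_of_nonneg hG hF₀ hG₀
  calc ∑' α, H α ≤ ∑' α, ∑ p ∈ antidiagonal α, F p.1 * G p.2 :=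
        (summable_of_le_sum_antidiagonal hF₀ hG₀ hH₀ hF hG hH).tsum_le_tsum hH
          (summable_sum_mul_antidiagonal_of_summable_mul hFG)
    _ = (∑' α, F α) * ∑' α, G α := (hF.tsum_mul_tsum_eq_tsum_sum_antidiagonal hG hFG).symm

end WeightedCauchyProduct

namespace MvPowerSeries

variable {σ R : Type*} [NormedRing R] {w : (σ →₀ ℕ) → ℝ}

theorem norm_coeff_mul_mul_le_sum_antidiagonal [DecidableEq σ] (hw₀ : 0 ≤ w)
    (hw : ∀ a b, w (a + b) ≤ w a * w b) (f g : MvPowerSeries σ R) (α : σ →₀ ℕ) :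
    ‖coeff α (f * g)‖ * w α ≤
      ∑ p ∈ antidiagonal α, (‖coeff p.1 f‖ * w p.1) * (‖coeff p.2 g‖ * w p.2) := by
  rw [coeff_mul]
  refine (mul_le_mul_of_nonneg_right (norm_sum_le _ _) (hw₀ α)).trans ?_
  rw [sum_mul]
  refine sum_le_sum fun p hp => ?_
  rw [← mem_antidiagonal.mp hp]
  calc ‖coeff p.1 f * coeff p.2 g‖ * w (p.1 + p.2)
      ≤ (‖coeff p.1 f‖ * ‖coeff p.2 g‖) * (w p.1 * w p.2) :=
        mul_le_mul (norm_mul_le _ _) (hw _ _) (hw₀ _) (by positivity)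
    _ = (‖coeff p.1 f‖ * w p.1) * (‖coeff p.2 g‖ * w p.2) := by ring

theorem summable_norm_coeff_mul_mul_and_tsum_le (hw₀ : 0 ≤ w)
    (hw : ∀ a b, w (a + b) ≤ w a * w b) {f g : MvPowerSeries σ R}
    (hf : Summable fun α => ‖coeff α f‖ * w α) (hg : Summable fun α => ‖coeff α g‖ * w α) :
    (Summable fun α => ‖coeff α (f * g)‖ * w α) ∧
      ∑' α, ‖coeff α (f * g)‖ * w α ≤
        (∑' α, ‖coeff α f‖ * w α) * ∑' α, ‖coeff α g‖ * w α := by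
  classical
  have hF₀ : 0 ≤ fun α => ‖coeff α f‖ * w α := fun α => mul_nonneg (norm_nonneg _) (hw₀ α)
  have hG₀ : 0 ≤ fun α => ‖coeff α g‖ * w α := fun α => mul_nonneg (norm_nonneg _) (hw₀ α)
  have hH₀ : 0 ≤ fun α => ‖coeff α (f * g)‖ * w α := fun α => mul_nonneg (norm_nonneg _) (hw₀ α)
  have hH := norm_coeff_mul_mul_le_sum_antidiagonal hw₀ hw f g
  exact ⟨summable_of_le_sum_antidiagonal hF₀ hG₀ hH₀ hf hg hH,
    tsum_le_tsum_mul_tsum_of_le_sum_antidiagonal hF₀ hG₀ hH₀ hf hg hH⟩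

end MvPowerSeries

/-- Banach-algebra property of `𝒜^{n,r}`.
For `f : MvPowerSeries (Fin n) ℂ` let
`N(f) = ∑' α, ‖coeff α f‖ · r^|α|`.  If the families defining `N(f)` and `N(g)` are
summable, then so is the family defining `N(f * g)`, and `N(f * g) ≤ N(f) · N(g)`. -/
theorem mvPowerSeries_weighted_l1_mul_le (n : ℕ) (r : ℝ) (hr : 0 ≤ r)
    (f g : MvPowerSeries (Fin n) ℂ)
    (hf : Summable fun α : (Fin n) →₀ ℕ =>
      ‖MvPowerSeries.coeff α f‖ * r ^ (α.sum fun _ k => k))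
    (hg : Summable fun α : (Fin n) →₀ ℕ =>
      ‖MvPowerSeries.coeff α g‖ * r ^ (α.sum fun _ k => k)) :
    (Summable fun α : (Fin n) →₀ ℕ =>
      ‖MvPowerSeries.coeff α (f * g)‖ * r ^ (α.sum fun _ k => k)) ∧
    (∑' α : (Fin n) →₀ ℕ, ‖MvPowerSeries.coeff α (f * g)‖ * r ^ (α.sum fun _ k => k)) ≤
      (∑' α : (Fin n) →₀ ℕ, ‖MvPowerSeries.coeff α f‖ * r ^ (α.sum fun _ k => k)) *
        ∑' α : (Fin n) →₀ ℕ, ‖MvPowerSeries.coeff α g‖ * r ^ (α.sum fun _ k => k) := by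
  have hw : ∀ a b : Fin n →₀ ℕ, r ^ ((a + b).sum fun _ k => k) =
      r ^ (a.sum fun _ k => k) * r ^ (b.sum fun _ k => k) := fun a b => by
    rw [Finsupp.sum_add_index' (fun _ => rfl) (fun _ _ _ => rfl), pow_add]
  exact MvPowerSeries.summable_norm_coeff_mul_mul_and_tsum_le (fun α => pow_nonneg hr _)
    (fun a b => (hw a b).le) hf hg
end

section
/- Let M be a Hausdorff, finite-dimensional smooth manifold without boundary modeled on ℝ^d (a C² manifold suffices), let N ∈ ℕ, and let V : Fin N → (Π x : M, TangentSpace (𝓡 d) x) be vector fields that are C¹ as sections of the tangent bundle. Let K ⊆ M be compact. Then there exists η > 0 such that for every x₀ ∈ K and every a : Fin N → ℝ with ∑ i, (a i)² < η², there exists γ : ℝ → M with γ 0 = x₀ and IsIntegralCurveOn γ (fun x => ∑ i, a i • V i x) (Set.Icc (0 : ℝ) 1); that is, the flow e^{a₁V₁ + ⋯ + a_N V_N} x₀ exists up to time 1. -/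
/-!
In a chart around `p`, the fields `∑ i, a i • V i` are Lipschitz on a fixed closed ball, uniformly
in `a` near `0`, and their speed there is `O(‖a‖)`. Picard–Lindelöf therefore produces integral
curves up to time `1`, staying in the chart, for all `(a, x)` near `(0, p)`. Compactness of `K`
turns these neighbourhoods into one neighbourhood of `0` in the parameter space that works for
every starting point in `K`.
-/

open scoped Manifold Topology NNReal
open Function Metric Set

/-- The notion `IsIntegralCurveOn` of Mathlib (December 2024) for curves in a manifold:
`γ` has derivative `v (γ t)` at every `t ∈ s` (a full, not within-`s`, derivative). -/
def IsIntegralCurveOnMfld {E : Type*} [NormedAddCommGroup E] [NormedSpace ℝ E]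
    {H : Type*} [TopologicalSpace H] {I : ModelWithCorners ℝ E H}
    {M : Type*} [TopologicalSpace M] [ChartedSpace H M]
    (γ : ℝ → M) (v : (x : M) → TangentSpace I x) (s : Set ℝ) : Prop :=
  ∀ t ∈ s, HasMFDerivAt 𝓘(ℝ, ℝ) I γ t ((1 : ℝ →L[ℝ] ℝ).smulRight <| v (γ t))

namespace IsPicardLindelof

variable {E : Type*} [NormedAddCommGroup E] [NormedSpace ℝ E] [CompleteSpace E]
  {f : ℝ → E → E} {tmin tmax : ℝ} {t₀ : Icc tmin tmax} {x₀ x : E} {a r L K : ℝ≥0}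

theorem exists_eq_forall_mem_Icc_hasDerivWithinAt_mem_closedBall
    (hf : IsPicardLindelof f t₀ x₀ a r L K) (hx : x ∈ closedBall x₀ r) :
    ∃ α : ℝ → E, α t₀ = x ∧ ∀ t ∈ Icc tmin tmax,
      HasDerivWithinAt α (f t (α t)) (Icc tmin tmax) t ∧ α t ∈ closedBall x₀ a := by
  obtain ⟨α, hα⟩ := ODE.FunSpace.exists_isFixedPt_next hf hx
  have hmem (t : ℝ) : α.compProj t ∈ closedBall x₀ a := α.compProj_mem_closedBall hf.mul_max_le
  refine ⟨α.compProj, by rw [ODE.FunSpace.compProj_val, ← hα, ODE.FunSpace.next_apply₀],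
    fun t ht ↦ ⟨?_, hmem t⟩⟩
  refine ODE.hasDerivWithinAt_picard_Icc t₀.2 hf.continuousOn_uncurry
    α.continuous_compProj.continuousOn (fun t _ ↦ hmem t) x ht |>.congr_of_mem (fun t' ht' ↦ ?_) ht
  nth_rw 1 [← hα]
  rw [ODE.FunSpace.compProj_of_mem ht', ODE.FunSpace.next_apply]

end IsPicardLindelof

section NormedSpace

variable {E F : Type*} [NormedAddCommGroup E] [NormedSpace ℝ E]
  [NormedAddCommGroup F] [NormedSpace ℝ F]

theorem ContDiffAt.exists_closedBall_subset_lipschitzOnWith {f : E → F} {c : E} (hf : ContDiffAt ℝ 1 f c) {s : Set E} (hs : s ∈ 𝓝 c) :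
    ∃ R > 0, closedBall c R ⊆ s ∧ ∃ K, LipschitzOnWith K f (closedBall c R) := by
  obtain ⟨K, t, ht, hK⟩ := hf.exists_lipschitzOnWith
  obtain ⟨R, hR, hRst⟩ := nhds_basis_closedBall.mem_iff.mp (Filter.inter_mem hs ht)
  exact ⟨R, hR, hRst.trans inter_subset_left, K, hK.mono (hRst.trans inter_subset_right)⟩

theorem ContDiffAt.eventually_exists_forall_mem_Icc_hasDerivAt [CompleteSpace E]
    {Ψ : E → F →L[ℝ] E} {c : E} (hΨ : ContDiffAt ℝ 1 Ψ c) {s : Set E} (hs : s ∈ 𝓝 c) :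
    ∀ᶠ z : F × E in 𝓝 (0, c), ∃ α : ℝ → E, α 0 = z.2 ∧
      ∀ t ∈ Icc (0 : ℝ) 1, HasDerivAt α (Ψ (α t) z.1) t ∧ α t ∈ s := by
  obtain ⟨R, hR, hRs, K, hK⟩ := hΨ.exists_closedBall_subset_lipschitzOnWith hs
  set C := ‖Ψ c‖ + K * R
  have hΨC : ∀ y ∈ closedBall c R, ‖Ψ y‖ ≤ C := fun y hy ↦ calc
    ‖Ψ y‖ ≤ ‖Ψ c‖ + ‖Ψ y - Ψ c‖ := norm_le_norm_add_norm_sub' _ _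
    _ ≤ ‖Ψ c‖ + K * ‖y - c‖ := by gcongr; exact hK.norm_sub_le hy (mem_closedBall_self hR.le)
    _ ≤ ‖Ψ c‖ + K * R := by gcongr; exact mem_closedBall_iff_norm.mp hy
  have hx : ∀ᶠ z : F × E in 𝓝 (0, c), z.2 ∈ closedBall c (R / 2) :=
    continuousAt_snd.eventually_mem (closedBall_mem_nhds c (half_pos hR))
  have ha : ∀ᶠ z : F × E in 𝓝 (0, c), ‖z.1‖ * C * 2 < R / 2 :=
    ContinuousAt.eventually_lt (by fun_prop) continuousAt_const (by simpa using half_pos hR)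
  filter_upwards [hx, ha] with ⟨a, x⟩ hx ha
  -- `Icc 0 1` lies in the interior of the time interval `Icc (-2) 2`.
  have hpl : IsPicardLindelof (fun _ ↦ (Ψ · a)) (tmin := -2) (tmax := 2) ⟨0, by norm_num⟩ c
      ⟨R, hR.le⟩ ⟨R / 2, by positivity⟩ ⟨‖a‖ * C, by positivity⟩
      (‖ContinuousLinearMap.apply ℝ E a‖₊ * K) := by
    refine .of_time_independent (fun y hy ↦ ?_)
      ((ContinuousLinearMap.apply ℝ E a).lipschitz.comp_lipschitzOnWith hK) ?_
    · calc ‖Ψ y a‖ ≤ ‖Ψ y‖ * ‖a‖ := (Ψ y).le_opNorm a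
        _ ≤ ‖a‖ * C := by rw [mul_comm]; gcongr; exact hΨC y hy
    · change ‖a‖ * C * max (2 - 0) (0 - -2) ≤ R - R / 2
      norm_num
      linarith
  obtain ⟨α, hα0, hα⟩ := hpl.exists_eq_forall_mem_Icc_hasDerivWithinAt_mem_closedBall hx
  refine ⟨α, hα0, fun t ht ↦ ?_⟩
  have ht' : t ∈ Icc (-2 : ℝ) 2 := ⟨by linarith [ht.1], by linarith [ht.2]⟩
  exact ⟨(hα t ht').1.hasDerivAt (Icc_mem_nhds (by linarith [ht.1]) (by linarith [ht.2])),
    hRs (hα t ht').2⟩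

end NormedSpace

section Manifold

variable {E : Type*} [NormedAddCommGroup E] [NormedSpace ℝ E]
  {H : Type*} [TopologicalSpace H] (I : ModelWithCorners ℝ E H)
  {M : Type*} [TopologicalSpace M] [ChartedSpace H M] [IsManifold I 1 M]

noncomputable def chartVectorField (v : (x : M) → TangentSpace I x) (p : M) (y : E) : E :=
  tangentCoordChange I ((extChartAt I p).symm y) p ((extChartAt I p).symm y)
    (v ((extChartAt I p).symm y))

variable {I}

theorem chartVectorField_sum_smul {ι : Type*} [Fintype ι] (a : ι → ℝ)
    (V : ι → (x : M) → TangentSpace I x) (p : M) (y : E) :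
    chartVectorField I (fun x ↦ ∑ i, a i • V i x) p y = ∑ i, a i • chartVectorField I (V i) p y :=
  (map_sum (tangentCoordChange I _ p _) _ _).trans <| Finset.sum_congr rfl fun _ _ ↦ map_smul _ _ _

theorem contDiffAt_chartVectorField {v : (x : M) → TangentSpace I x} {p : M}
    (hv : ContMDiffAt I I.tangent 1 (fun x ↦ (⟨x, v x⟩ : TangentBundle I M)) p)
    (hp : I.IsInteriorPoint p) :
    ContDiffAt ℝ 1 (chartVectorField I v p) (extChartAt I p p) := by
  rw [contMDiffAt_iff] at hv
  exact hv.2.contDiffAt (range_mem_nhds_isInteriorPoint hp) |>.snd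

theorem isIntegralCurveOnMfld_extChartAt_symm_comp {v : (x : M) → TangentSpace I x} {p : M}
    {α : ℝ → E} {s : Set ℝ}
    (hα : ∀ t ∈ s, HasDerivAt α (chartVectorField I v p (α t)) t ∧
      α t ∈ interior (extChartAt I p).target) :
    IsIntegralCurveOnMfld ((extChartAt I p).symm ∘ α) v s := by
  intro t ht
  set xₜ : M := (extChartAt I p).symm (α t)
  obtain ⟨hderiv, hint⟩ := hα t ht
  have htarget := interior_subset hint
  have hsource : xₜ ∈ (extChartAt I p).source := (extChartAt I p).map_target htarget
  have hself := mem_extChartAt_source (I := I) xₜ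
  have hchange : HasFDerivAt (extChartAt I xₜ ∘ (extChartAt I p).symm)
      (tangentCoordChange I p xₜ xₜ) (α t) := by
    refine HasFDerivWithinAt.hasFDerivAt (s := range I) ?_ <| mem_nhds_iff.mpr
      ⟨_, interior_subset.trans (extChartAt_target_subset_range p), isOpen_interior, hint⟩
    have := hasFDerivWithinAt_tangentCoordChange (I := I) ⟨hsource, hself⟩
    rwa [(extChartAt I p).right_inv htarget] at this
  refine ⟨(continuousAt_extChartAt_symm'' htarget).comp hderiv.continuousAt,
    HasDerivWithinAt.hasFDerivWithinAt (F := TangentSpace I xₜ) ?_⟩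
  simp only [mfld_simps]
  change HasDerivWithinAt ((extChartAt I xₜ ∘ (extChartAt I p).symm) ∘ α : ℝ → E) (v xₜ : E) univ t
  refine ((hchange.comp_hasDerivAt t hderiv).congr_deriv ?_).hasDerivWithinAt
  exact (tangentCoordChange_comp ⟨⟨hself, hsource⟩, hself⟩).trans (tangentCoordChange_self hself)

theorem eventually_exists_isIntegralCurveOnMfld_sum_smul [CompleteSpace E] {ι : Type*}
    [Fintype ι] {V : ι → (x : M) → TangentSpace I x} {p : M}
    (hV : ∀ i, ContMDiffAt I I.tangent 1 (fun x ↦ (⟨x, V i x⟩ : TangentBundle I M)) p)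
    (hp : I.IsInteriorPoint p) :
    ∀ᶠ z : (ι → ℝ) × M in 𝓝 (0, p), ∃ γ : ℝ → M, γ 0 = z.2 ∧
      IsIntegralCurveOnMfld γ (fun x ↦ ∑ i, z.1 i • V i x) (Icc 0 1) := by
  -- `Ψ y a` is the chart representative of `∑ i, a i • V i` at `y`.
  set Ψ : E → (ι → ℝ) →L[ℝ] E := fun y ↦
    ∑ i, (ContinuousLinearMap.proj i).smulRight (chartVectorField I (V i) p y)
  have hΨ : ContDiffAt ℝ 1 Ψ (extChartAt I p p) :=
    .sum fun i _ ↦ contDiffAt_const.smulRight (contDiffAt_chartVectorField (hV i) hp)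
  have hcurves := hΨ.eventually_exists_forall_mem_Icc_hasDerivAt
    (isOpen_interior.mem_nhds (I.isInteriorPoint_iff.mp hp))
  have hchart : ContinuousAt (Prod.map id (extChartAt I p)) ((0 : ι → ℝ), p) :=
    continuousAt_id.prodMap (continuousAt_extChartAt p)
  filter_upwards [hchart.eventually hcurves,
    continuousAt_snd.eventually_mem (extChartAt_source_mem_nhds (I := I) p)]
    with ⟨a, x⟩ ⟨α, hα0, hα⟩ hx
  refine ⟨(extChartAt I p).symm ∘ α, by
    rw [comp_apply, hα0]; exact (extChartAt I p).left_inv hx,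
    isIntegralCurveOnMfld_extChartAt_symm_comp fun t ht ↦ ⟨?_, (hα t ht).2⟩⟩
  simpa [Ψ, chartVectorField_sum_smul] using (hα t ht).1

end Manifold

theorem pi_norm_lt_of_sum_sq_lt {ι : Type*} [Fintype ι] {a : ι → ℝ} {η : ℝ} (hη : 0 < η)
    (ha : ∑ i, a i ^ 2 < η ^ 2) : ‖a‖ < η :=
  (pi_norm_lt_iff hη).2 fun i ↦ abs_lt_of_sq_lt_sq
    ((Finset.single_le_sum (fun j _ ↦ sq_nonneg (a j)) (Finset.mem_univ i)).trans_lt ha) hη.le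

theorem exists_uniform_flow_time_general
    (d : ℕ) (M : Type*) [TopologicalSpace M]
    [ChartedSpace (EuclideanSpace ℝ (Fin d)) M]
    [IsManifold (𝓡 d) (⊤ : ℕ∞) M]
    (N : ℕ) (V : Fin N → (Π x : M, TangentSpace (𝓡 d) x))
    (hV : ∀ i, ContMDiff (𝓡 d) (𝓡 d).tangent 1
      (fun x => (⟨x, V i x⟩ : TangentBundle (𝓡 d) M)))
    (K : Set M) (hK : IsCompact K) :
    ∃ η : ℝ, 0 < η ∧
      ∀ x₀ ∈ K, ∀ a : Fin N → ℝ, (∑ i, (a i) ^ 2) < η ^ 2 →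
        ∃ γ : ℝ → M, γ 0 = x₀ ∧
          IsIntegralCurveOnMfld γ (fun x => ∑ i, a i • V i x) (Set.Icc (0 : ℝ) 1) := by
  have hflow : ∀ᶠ a in 𝓝 (0 : Fin N → ℝ), ∀ x₀ ∈ K, ∃ γ : ℝ → M, γ 0 = x₀ ∧
      IsIntegralCurveOnMfld γ (fun x ↦ ∑ i, a i • V i x) (Icc 0 1) :=
    hK.eventually_forall_of_forall_eventually fun p _ ↦
      eventually_exists_isIntegralCurveOnMfld_sum_smul (fun i ↦ hV i p)
        BoundarylessManifold.isInteriorPoint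
  obtain ⟨η, hη, hball⟩ := Metric.eventually_nhds_iff.mp hflow
  refine ⟨η, hη, fun x₀ hx₀ a ha ↦ hball ?_ x₀ hx₀⟩
  rw [dist_zero_right]
  exact pi_norm_lt_of_sum_sq_lt hη ha

/-- uniform existence time for flows of `C¹` vector fields over a compact
set.  Let `M` be a Hausdorff smooth manifold without boundary modeled on `ℝ^d`, let
`V₁, …, V_N` be `C¹` vector fields on `M`, and let `K ⊆ M` be compact.  Then there is
`η > 0` such that for every `x₀ ∈ K` and every `a ∈ ℝ^N` with `∑ i, (a i)² < η²` the flow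
`e^{a₁V₁ + ⋯ + a_N V_N} x₀` exists up to time 1. -/
theorem exists_uniform_flow_time
    (d : ℕ) (M : Type*) [TopologicalSpace M] [T2Space M]
    [ChartedSpace (EuclideanSpace ℝ (Fin d)) M]
    [IsManifold (𝓡 d) (⊤ : ℕ∞) M]
    (N : ℕ) (V : Fin N → (Π x : M, TangentSpace (𝓡 d) x))
    (hV : ∀ i, ContMDiff (𝓡 d) (𝓡 d).tangent 1
      (fun x => (⟨x, V i x⟩ : TangentBundle (𝓡 d) M)))
    (K : Set M) (hK : IsCompact K) :
    ∃ η : ℝ, 0 < η ∧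
      ∀ x₀ ∈ K, ∀ a : Fin N → ℝ, (∑ i, (a i) ^ 2) < η ^ 2 →
        ∃ γ : ℝ → M, γ 0 = x₀ ∧
          IsIntegralCurveOnMfld γ (fun x => ∑ i, a i • V i x) (Set.Icc (0 : ℝ) 1) :=
  exists_uniform_flow_time_general d M N V hV K hK
end

section
/- Let M be a Hausdorff, finite-dimensional smooth manifold without boundary modeled on ℝ^d (a C² manifold suffices), let N ∈ ℕ, and let V : Fin N → (Π x : M, TangentSpace (𝓡 d) x) be vector fields that are C¹ as sections of the tangent bundle. Let K ⊆ M be compact. Then there exists δ₀ > 0 such that for every θ : Fin N → ℝ with ∑ i, (θ i)² = 1, every x ∈ K with ∑ i, θ i • V i x ≠ 0, every r ∈ (0, δ₀], and every curve γ : ℝ → M with γ 0 = x and IsIntegralCurveOn γ (fun y => ∑ i, (r * θ i) • V i y) (Set.Icc (0 : ℝ) 1), one has γ 1 ≠ x; that is, e^{rθ₁V₁ + ⋯ + rθ_N V_N} x ≠ x whenever this flow is defined. -/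
open scoped Manifold NNReal RealInnerProductSpace
open Set Filter Topology Metric

/-!
Work in the chart at a point `x₀ ∈ K`. On a small closed ball around the image of `x₀` the
fields `V i` read in this chart are Lipschitz and bounded, so for small `r` and `|c i| ≤ r` the
field `∑ i, c i • V i` is read as a map `Z` whose Lipschitz constant `L` is below `log 2` and
whose norm is so small that an integral curve of duration `1` starting near `x₀` never leaves
the ball. Along the chart image `φ` of such a curve, Gronwall's inequality gives
`‖Z (φ t) - Z (φ 0)‖ ≤ ‖Z (φ 0)‖ (exp (L t) - 1) < ‖Z (φ 0)‖`, so `t ↦ ⟪Z (φ 0), φ t⟫` is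
strictly increasing and `φ 1 ≠ φ 0` as soon as `Z (φ 0) ≠ 0`. Compactness of `K` makes the
smallness threshold for `r` uniform.
-/

theorem abs_le_one_of_sum_sq_eq_one {ι : Type*} [Fintype ι] {θ : ι → ℝ}
    (hθ : ∑ i, θ i ^ 2 = 1) (i : ι) : |θ i| ≤ 1 := by
  rw [← sq_le_one_iff_abs_le_one, ← hθ]
  exact Finset.single_le_sum (fun j _ ↦ sq_nonneg (θ j)) (Finset.mem_univ i)

theorem norm_sum_smul_le {ι E : Type*} [Fintype ι] [SeminormedAddCommGroup E] [NormedSpace ℝ E]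
    {c : ι → ℝ} {r : ℝ} (hc : ∀ i, |c i| ≤ r) (x : ι → E) :
    ‖∑ i, c i • x i‖ ≤ r * ∑ i, ‖x i‖ := by
  rw [Finset.mul_sum]
  refine (norm_sum_le _ _).trans (Finset.sum_le_sum fun i _ ↦ ?_)
  rw [norm_smul, Real.norm_eq_abs]
  exact mul_le_mul_of_nonneg_right (hc i) (norm_nonneg _)

theorem real_inner_pos_of_norm_sub_lt_norm {E : Type*} [NormedAddCommGroup E]
    [InnerProductSpace ℝ E] {v w : E} (h : ‖w - v‖ < ‖v‖) : 0 < ⟪v, w⟫ := by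
  have := norm_sub_sq_real w v
  rw [real_inner_comm] at this
  nlinarith [norm_nonneg (w - v), norm_nonneg w, sq_nonneg ‖w‖]

section AutonomousODE

variable {E : Type*} [NormedAddCommGroup E] {F : E → E} {s : Set E} {K : ℝ≥0} {φ : ℝ → E}
  {a b : ℝ}

theorem IsIntegralCurveOn.dist_velocity_le [NormedSpace ℝ E]
    (hφ : IsIntegralCurveOn φ (fun _ ↦ F) (Icc a b)) (hφs : MapsTo φ (Icc a b) s)
    (hF : LipschitzOnWith K F s) {t : ℝ} (ht : t ∈ Icc a b) :
    dist (F (φ t)) (F (φ a)) ≤ ‖F (φ a)‖ * (Real.exp (K * (t - a)) - 1) := by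
  have hlip : ∀ t ∈ Icc a b, dist (F (φ t)) (F (φ a)) ≤ K * ‖φ t - φ a‖ := fun t ht ↦ by
    rw [← dist_eq_norm]; exact hF.dist_le_mul _ (hφs ht) _ (hφs ⟨le_rfl, ht.1.trans ht.2⟩)
  have hbound : ∀ t ∈ Ico a b, ‖F (φ t)‖ ≤ K * ‖φ t - φ a‖ + ‖F (φ a)‖ := fun t ht ↦
    calc ‖F (φ t)‖ ≤ dist (F (φ t)) (F (φ a)) + ‖F (φ a)‖ := by
          rw [dist_eq_norm]; exact norm_le_norm_sub_add _ _
      _ ≤ K * ‖φ t - φ a‖ + ‖F (φ a)‖ := by gcongr; exact hlip t (Ico_subset_Icc_self ht)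
  have hgron := norm_le_gronwallBound_of_norm_deriv_right_le (f := fun t ↦ φ t - φ a) (δ := 0)
    (fun t ht ↦ ((hφ t ht).sub_const _).continuousWithinAt)
    (fun t ht ↦ ((hφ t (Ico_subset_Icc_self ht)).sub_const _).mono_of_mem_nhdsWithin
      (Icc_mem_nhdsGE_of_mem ht)) (by simp) hbound t ht
  calc dist (F (φ t)) (F (φ a)) ≤ K * ‖φ t - φ a‖ := hlip t ht
    _ ≤ K * gronwallBound 0 K ‖F (φ a)‖ (t - a) := by gcongr
    _ = ‖F (φ a)‖ * (Real.exp (K * (t - a)) - 1) := by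
        rcases eq_or_ne (K : ℝ) 0 with hK | hK
        · simp [hK]
        · rw [gronwallBound_of_K_ne_0 hK]; field_simp; ring

theorem IsIntegralCurveOn.apply_ne_of_lipschitzOnWith [InnerProductSpace ℝ E]
    (hφ : IsIntegralCurveOn φ (fun _ ↦ F) (Icc a b)) (hφs : MapsTo φ (Icc a b) s)
    (hF : LipschitzOnWith K F s) (hab : a < b) (hK : K * (b - a) < Real.log 2)
    (hFa : F (φ a) ≠ 0) : φ b ≠ φ a := by
  set v := F (φ a)
  have hpos : ∀ t ∈ Icc a b, 0 < ⟪v, F (φ t)⟫ := fun t ht ↦ by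
    refine real_inner_pos_of_norm_sub_lt_norm ?_
    have hexp : Real.exp (K * (t - a)) < 2 := by
      calc Real.exp (K * (t - a)) ≤ Real.exp (K * (b - a)) := by gcongr; exact ht.2
        _ < Real.exp (Real.log 2) := Real.exp_lt_exp.2 hK
        _ = 2 := Real.exp_log two_pos
    calc ‖F (φ t) - v‖ = dist (F (φ t)) v := (dist_eq_norm _ _).symm
      _ ≤ ‖v‖ * (Real.exp (K * (t - a)) - 1) := hφ.dist_velocity_le hφs hF ht
      _ < ‖v‖ := by nlinarith [norm_pos_iff.2 hFa]
  have hmono : StrictMonoOn (fun t ↦ ⟪v, φ t⟫) (Icc a b) := by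
    refine strictMonoOn_of_hasDerivWithinAt_pos (convex_Icc a b)
      (fun t ht ↦ continuousWithinAt_const.inner (hφ t ht).continuousWithinAt) (fun t ht ↦ ?_)
      (fun t ht ↦ hpos t (interior_subset ht))
    rw [interior_Icc] at ht ⊢
    simpa using (hasDerivWithinAt_const t _ v).inner ℝ
      ((hφ t (Ioo_subset_Icc_self ht)).mono Ioo_subset_Icc_self)
  exact fun h ↦ (hmono ⟨le_rfl, hab.le⟩ ⟨hab.le, le_rfl⟩ hab).ne (by simp only [h])

end AutonomousODE

theorem ContinuousOn.mapsTo_Icc_of_bootstrap {X : Type*} [TopologicalSpace X] {γ : ℝ → X}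
    {a b : ℝ} {U C : Set X} (hγ : ContinuousOn γ (Icc a b)) (hU : IsOpen U) (hC : IsClosed C)
    (hCU : C ⊆ U) (ha : γ a ∈ C) (hboot : ∀ t ∈ Icc a b, MapsTo γ (Icc a t) U → γ t ∈ C) :
    MapsTo γ (Icc a b) C := by
  refine fun t ht ↦ IsClosed.Icc_subset_of_forall_mem_nhdsGT_of_Icc_subset
    (s := γ ⁻¹' C) ?_ ha (fun t ht htC ↦ ?_) ht
  · rw [inter_comm]; exact hγ.preimage_isClosed_of_isClosed isClosed_Icc hC
  have hγU : γ ⁻¹' U ∈ 𝓝[>] t :=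
    (hγ t (Ico_subset_Icc_self ht)).mono_of_mem_nhdsWithin (Icc_mem_nhdsGT_of_mem ht)
      (hU.mem_nhds (hCU (htC ⟨ht.1, le_rfl⟩)))
  obtain ⟨m, htm, hm⟩ := (mem_nhdsGT_iff_exists_Ioo_subset' ht.2).1 hγU
  refine mem_of_superset (Ioo_mem_nhdsGT (lt_min htm ht.2)) fun u hu ↦ ?_
  refine hboot u ⟨ht.1.trans hu.1.le, hu.2.le.trans (min_le_right _ _)⟩ fun s hs ↦ ?_
  rcases le_or_gt s t with hst | hts
  · exact hCU (htC ⟨hs.1, hst⟩)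
  · exact hm ⟨hts, hs.2.trans_lt (hu.2.trans_le (min_le_left _ _))⟩

section VectorFieldInChart

variable {E : Type*} [NormedAddCommGroup E] [NormedSpace ℝ E] {H : Type*} [TopologicalSpace H]
  {I : ModelWithCorners ℝ E H} {M : Type*} [TopologicalSpace M] [ChartedSpace H M]
  [IsManifold I 1 M]

variable (I) in
/-- Only meaningful on `(extChartAt I x₀).target`: elsewhere `tangentCoordChange` is junk. -/
noncomputable def vectorFieldInChart (x₀ : M) (V : Π x : M, TangentSpace I x) (u : E) : E :=
  tangentCoordChange I ((extChartAt I x₀).symm u) x₀ ((extChartAt I x₀).symm u)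
    (V ((extChartAt I x₀).symm u))

theorem vectorFieldInChart_sum_smul {ι : Type*} [Fintype ι] (x₀ : M)
    (V : ι → Π x : M, TangentSpace I x) (c : ι → ℝ) (u : E) :
    vectorFieldInChart I x₀ (fun y ↦ ∑ i, c i • V i y) u =
      ∑ i, c i • vectorFieldInChart I x₀ (V i) u :=
  (map_sum _ _ _).trans (Finset.sum_congr rfl fun _ _ ↦ map_smul _ _ _)

theorem vectorFieldInChart_apply_extChartAt {x₀ x : M} (hx : x ∈ (extChartAt I x₀).source)
    (V : Π x : M, TangentSpace I x) :
    vectorFieldInChart I x₀ V (extChartAt I x₀ x) = tangentCoordChange I x x₀ x (V x) := by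
  rw [vectorFieldInChart, (extChartAt I x₀).left_inv hx]

theorem vectorFieldInChart_apply_extChartAt_ne_zero {x₀ x : M}
    (hx : x ∈ (extChartAt I x₀).source) {V : Π x : M, TangentSpace I x} (hV : V x ≠ 0) :
    vectorFieldInChart I x₀ V (extChartAt I x₀ x) ≠ 0 := by
  have hxx := mem_extChartAt_source (I := I) x
  rw [vectorFieldInChart_apply_extChartAt hx]
  intro h
  apply hV
  have hcomp : tangentCoordChange I x₀ x x (tangentCoordChange I x x₀ x (V x)) = V x :=
    (tangentCoordChange_comp ⟨⟨hxx, hx⟩, hxx⟩).trans (tangentCoordChange_self hxx)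
  rw [← hcomp, h, map_zero]; rfl

theorem IsMIntegralCurveOn.hasDerivWithinAt_extChartAt {γ : ℝ → M}
    {v : Π x : M, TangentSpace I x} {s : Set ℝ} (hγ : IsMIntegralCurveOn γ v s) {t : ℝ}
    (ht : t ∈ s) {x₀ : M} (hsrc : γ t ∈ (extChartAt I x₀).source) :
    HasDerivWithinAt (extChartAt I x₀ ∘ γ) (vectorFieldInChart I x₀ v (extChartAt I x₀ (γ t)))
      s t := by
  rw [vectorFieldInChart_apply_extChartAt hsrc]
  rw [extChartAt_source] at hsrc
  have h := (hasMFDerivAt_extChartAt (I := I) hsrc).comp_hasMFDerivWithinAt t (hγ t ht)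
  rw [mfderiv_chartAt_eq_tangentCoordChange hsrc, hasMFDerivWithinAt_iff_hasFDerivWithinAt] at h
  rw [hasDerivWithinAt_iff_hasFDerivWithinAt]
  refine h.congr_fderiv ?_
  ext
  exact (tangentCoordChange I (γ t) x₀ (γ t)).map_smul (1 : ℝ) (v (γ t))

theorem ContMDiffAt.exists_lipschitzOnWith_vectorFieldInChart [I.Boundaryless]
    {V : Π x : M, TangentSpace I x} {x₀ : M}
    (hV : ContMDiffAt I I.tangent 1 (fun x ↦ (⟨x, V x⟩ : TangentBundle I M)) x₀) :
    ∃ K, ∃ s ∈ 𝓝 (extChartAt I x₀ x₀), LipschitzOnWith K (vectorFieldInChart I x₀ V) s := by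
  rw [contMDiffAt_iff] at hV
  exact (hV.2.contDiffAt (range_mem_nhds_isInteriorPoint
    (BoundarylessManifold.isInteriorPoint (x := x₀)))).snd.exists_lipschitzOnWith

theorem IsMIntegralCurveOn.mapsTo_extChartAt_closedBall [ProperSpace E] [T2Space M] {x₀ : M}
    {v : Π x : M, TangentSpace I x} {ρ : ℝ}
    (hρ : closedBall (extChartAt I x₀ x₀) ρ ⊆ (extChartAt I x₀).target)
    (hv : ∀ u ∈ closedBall (extChartAt I x₀ x₀) ρ, ‖vectorFieldInChart I x₀ v u‖ ≤ ρ / 4)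
    {γ : ℝ → M} (hγ : IsMIntegralCurveOn γ v (Icc 0 1)) (h0 : γ 0 ∈ (extChartAt I x₀).source)
    (h0' : extChartAt I x₀ (γ 0) ∈ ball (extChartAt I x₀ x₀) (ρ / 2)) :
    MapsTo γ (Icc 0 1)
      ((extChartAt I x₀).source ∩ extChartAt I x₀ ⁻¹' closedBall (extChartAt I x₀ x₀) ρ) := by
  set f := extChartAt I x₀
  have hρ0 : 0 < ρ := by linarith [pos_of_mem_ball h0']
  have hball : closedBall (f x₀) (3 / 4 * ρ) ⊆ closedBall (f x₀) ρ :=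
    closedBall_subset_closedBall (by linarith)
  set C := f.symm '' closedBall (f x₀) (3 / 4 * ρ)
  have hC : C ⊆ f.source ∩ f ⁻¹' closedBall (f x₀) (3 / 4 * ρ) := by
    rintro _ ⟨u, hu, rfl⟩
    exact ⟨f.map_target (hρ (hball hu)), by rwa [mem_preimage, f.right_inv (hρ (hball hu))]⟩
  have hmemC : ∀ y ∈ f.source, f y ∈ closedBall (f x₀) (3 / 4 * ρ) → y ∈ C :=
    fun y hy hfy ↦ ⟨f y, hfy, f.left_inv hy⟩
  have hCU : C ⊆ f.source ∩ f ⁻¹' ball (f x₀) ρ := fun y hy ↦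
    ⟨(hC hy).1, mem_ball.2 ((mem_closedBall.1 (hC hy).2).trans_lt (by linarith))⟩
  -- In the chart the curve moves by at most `ρ / 4`, so it never gets past radius `3 / 4 * ρ`.
  have htrap : MapsTo γ (Icc 0 1) C := by
    refine hγ.continuousOn.mapsTo_Icc_of_bootstrap (isOpen_extChartAt_preimage' x₀ isOpen_ball)
      ((isCompact_closedBall _ _).image_of_continuousOn
        ((continuousOn_extChartAt_symm x₀).mono (hball.trans hρ))).isClosed hCU
      (hmemC _ h0 (mem_closedBall.2 (by linarith [mem_ball.1 h0']))) fun t ht hU ↦ ?_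
    have hderiv : ∀ s ∈ Icc 0 t, HasDerivWithinAt (f ∘ γ)
        (vectorFieldInChart I x₀ v (f (γ s))) (Icc 0 t) s := fun s hs ↦
      (hγ.mono (Icc_subset_Icc_right ht.2)).hasDerivWithinAt_extChartAt hs (hU hs).1
    have hdisp := (convex_Icc 0 t).norm_image_sub_le_of_norm_hasDerivWithin_le hderiv
      (fun s hs ↦ hv _ (ball_subset_closedBall (hU hs).2)) ⟨le_rfl, ht.1⟩ ⟨ht.1, le_rfl⟩
    rw [sub_zero, Real.norm_of_nonneg ht.1, ← dist_eq_norm, Function.comp_apply,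
      Function.comp_apply] at hdisp
    have hρt : ρ / 4 * t ≤ ρ / 4 := mul_le_of_le_one_right (by positivity) ht.2
    refine hmemC _ (hU ⟨ht.1, le_rfl⟩).1 (mem_closedBall.2 ?_)
    calc dist (f (γ t)) (f x₀) ≤ dist (f (γ t)) (f (γ 0)) + dist (f (γ 0)) (f x₀) :=
          dist_triangle _ _ _
      _ ≤ 3 / 4 * ρ := by linarith [mem_ball.1 h0', hdisp]
  exact fun t ht ↦ ⟨(hC (htrap ht)).1, hball (hC (htrap ht)).2⟩

end VectorFieldInChart

section NoReturn

variable {E : Type*} [NormedAddCommGroup E] [InnerProductSpace ℝ E] [FiniteDimensional ℝ E]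
  {H : Type*} [TopologicalSpace H] {I : ModelWithCorners ℝ E H}
  {M : Type*} [TopologicalSpace M] [T2Space M] [ChartedSpace H M] [IsManifold I 1 M]

theorem IsMIntegralCurveOn.apply_one_ne_apply_zero {x₀ : M} {v : Π x : M, TangentSpace I x}
    {ρ : ℝ} {K : ℝ≥0} (hρ : closedBall (extChartAt I x₀ x₀) ρ ⊆ (extChartAt I x₀).target)
    (hlip : LipschitzOnWith K (vectorFieldInChart I x₀ v) (closedBall (extChartAt I x₀ x₀) ρ))
    (hK : K < Real.log 2)
    (hv : ∀ u ∈ closedBall (extChartAt I x₀ x₀) ρ, ‖vectorFieldInChart I x₀ v u‖ ≤ ρ / 4)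
    {γ : ℝ → M} (hγ : IsMIntegralCurveOn γ v (Icc 0 1)) (h0 : γ 0 ∈ (extChartAt I x₀).source)
    (h0' : extChartAt I x₀ (γ 0) ∈ ball (extChartAt I x₀ x₀) (ρ / 2)) (hv0 : v (γ 0) ≠ 0) :
    γ 1 ≠ γ 0 := by
  have htrap := hγ.mapsTo_extChartAt_closedBall hρ hv h0 h0'
  have hφ : IsIntegralCurveOn (extChartAt I x₀ ∘ γ) (fun _ ↦ vectorFieldInChart I x₀ v)
      (Icc 0 1) := fun t ht ↦ hγ.hasDerivWithinAt_extChartAt ht (htrap ht).1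
  have hne := hφ.apply_ne_of_lipschitzOnWith (fun t ht ↦ (htrap ht).2) hlip zero_lt_one
    (by simpa using hK) (vectorFieldInChart_apply_extChartAt_ne_zero h0 hv0)
  exact fun h ↦ hne (by simp only [Function.comp_apply, h])

theorem eventually_isMIntegralCurveOn_apply_one_ne [I.Boundaryless] {ι : Type*} [Fintype ι]
    {V : ι → Π x : M, TangentSpace I x} {x₀ : M}
    (hV : ∀ i, ContMDiffAt I I.tangent 1 (fun x ↦ (⟨x, V i x⟩ : TangentBundle I M)) x₀) :
    ∀ᶠ p : ℝ × M in 𝓝[>] 0 ×ˢ 𝓝 x₀, ∀ c : ι → ℝ, (∀ i, |c i| ≤ p.1) →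
      ∑ i, c i • V i p.2 ≠ 0 → ∀ γ : ℝ → M, γ 0 = p.2 →
        IsMIntegralCurveOn γ (fun y ↦ ∑ i, c i • V i y) (Icc 0 1) → γ 1 ≠ p.2 := by
  set f := extChartAt I x₀
  set Z := fun i ↦ vectorFieldInChart I x₀ (V i)
  choose K s hs hK using fun i ↦ (hV i).exists_lipschitzOnWith_vectorFieldInChart
  obtain ⟨ρ, hρ, hρs⟩ := nhds_basis_closedBall.mem_iff.1 <|
    inter_mem (iInter_mem.2 hs) (extChartAt_target_mem_nhds' (mem_extChartAt_target (I := I) x₀))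
  have hZs : ∀ i, closedBall (f x₀) ρ ⊆ s i := fun i u hu ↦ mem_iInter.1 (hρs hu).1 i
  obtain ⟨B, hB⟩ := (isCompact_closedBall (f x₀) ρ).exists_bound_of_continuousOn
    (f := fun u ↦ ∑ i, ‖Z i u‖)
    (continuousOn_finsetSum _ fun i _ ↦ ((hK i).mono (hZs i)).continuousOn.norm)
  set L := ∑ i, (K i : ℝ)
  have hsmall : ∀ᶠ r in 𝓝 (0 : ℝ), r * B < ρ / 4 ∧ r * L < Real.log 2 := by
    refine ((tendsto_id.mul_const B).eventually (gt_mem_nhds ?_)).and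
      ((tendsto_id.mul_const L).eventually (gt_mem_nhds ?_))
    · simpa using hρ
    · simpa using Real.log_pos one_lt_two
  have hnear : ∀ᶠ x in 𝓝 x₀, x ∈ f.source ∧ f x ∈ ball (f x₀) (ρ / 2) :=
    Eventually.and (extChartAt_source_mem_nhds (I := I) x₀) <|
      (continuousAt_extChartAt x₀).preimage_mem_nhds (ball_mem_nhds _ (half_pos hρ))
  have hr : ∀ᶠ r in 𝓝[>] (0 : ℝ), 0 < r ∧ r * B < ρ / 4 ∧ r * L < Real.log 2 :=
    Eventually.and self_mem_nhdsWithin (nhdsWithin_le_nhds hsmall)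
  filter_upwards [hr.prod_mk hnear]
  rintro ⟨r, x⟩ ⟨⟨hr, hrB, hrL⟩, hx, hfx⟩ c hc hcx γ rfl hγ
  have hZc : vectorFieldInChart I x₀ (fun y ↦ ∑ i, c i • V i y) = fun u ↦ ∑ i, c i • Z i u :=
    funext (vectorFieldInChart_sum_smul x₀ V c)
  refine hγ.apply_one_ne_apply_zero (K := (r * L).toNNReal) (fun u hu ↦ (hρs hu).2) ?_ ?_ ?_
    hx hfx hcx
  · rw [hZc]
    refine LipschitzOnWith.of_dist_le' fun u hu u' hu' ↦ ?_
    rw [dist_eq_norm, ← Finset.sum_sub_distrib]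
    simp_rw [← smul_sub]
    calc ‖∑ i, c i • (Z i u - Z i u')‖ ≤ r * ∑ i, ‖Z i u - Z i u'‖ := norm_sum_smul_le hc _
      _ ≤ r * ∑ i, K i * dist u u' := by
        gcongr with i
        rw [← dist_eq_norm]
        exact (hK i).dist_le_mul _ (hZs i hu) _ (hZs i hu')
      _ = r * L * dist u u' := by rw [← Finset.sum_mul, mul_assoc]
  · rw [Real.coe_toNNReal']
    exact max_lt hrL (Real.log_pos one_lt_two)
  · intro u hu
    rw [hZc]
    calc ‖∑ i, c i • Z i u‖ ≤ r * ∑ i, ‖Z i u‖ := norm_sum_smul_le hc _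
      _ ≤ r * B := by gcongr; exact (le_abs_self _).trans (hB u hu)
      _ ≤ ρ / 4 := hrB.le

end NoReturn

/-- uniform lower bound on first-return times over a compact set.
Let `M` be a Hausdorff smooth manifold without boundary modeled on `ℝ^d`, let
`V₁, …, V_N` be `C¹` vector fields on `M`, and let `K ⊆ M` be compact.  Then there is
`δ₀ > 0` such that for every unit vector `θ ∈ ℝ^N`, every `x ∈ K` at which
`∑ i, θ i • V i x ≠ 0`, and every `r ∈ (0, δ₀]`, the time-1 flow of
`r θ₁ V₁ + ⋯ + r θ_N V_N` starting at `x` (when it exists) does not return to `x`. -/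
theorem exists_uniform_no_return_time
    (d : ℕ) (M : Type*) [TopologicalSpace M] [T2Space M]
    [ChartedSpace (EuclideanSpace ℝ (Fin d)) M]
    [IsManifold (𝓡 d) (⊤ : ℕ∞) M]
    (N : ℕ) (V : Fin N → (Π x : M, TangentSpace (𝓡 d) x))
    (hV : ∀ i, ContMDiff (𝓡 d) (𝓡 d).tangent 1
      (fun x => (⟨x, V i x⟩ : TangentBundle (𝓡 d) M)))
    (K : Set M) (hK : IsCompact K) :
    ∃ δ₀ : ℝ, 0 < δ₀ ∧
      ∀ θ : Fin N → ℝ, (∑ i, (θ i) ^ 2) = 1 →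
        ∀ x ∈ K, (∑ i, θ i • V i x) ≠ 0 →
          ∀ r ∈ Set.Ioc (0 : ℝ) δ₀,
            ∀ γ : ℝ → M, γ 0 = x →
              (∀ t ∈ Set.Icc (0 : ℝ) 1, HasMFDerivAt 𝓘(ℝ, ℝ) (𝓡 d) γ t
                ((1 : ℝ →L[ℝ] ℝ).smulRight <| (fun y => ∑ i, (r * θ i) • V i y) (γ t))) →
              γ 1 ≠ x := by
  have hloc := hK.mem_prod_nhdsSet_of_forall fun x₀ _ ↦
    eventually_isMIntegralCurveOn_apply_one_ne fun i ↦ (hV i).contMDiffAt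
  obtain ⟨δ, hδ, hret⟩ := (nhdsGT_basis (0 : ℝ)).eventually_iff.1 <|
    (Eventually.curry hloc).mono fun _ h ↦ h.self_of_nhdsSet
  refine ⟨δ / 2, half_pos hδ, fun θ hθ x hx hθx r hr γ hγ0 hγ ↦ ?_⟩
  refine hret ⟨hr.1, by linarith [hr.2]⟩ x hx (fun i ↦ r * θ i) (fun i ↦ ?_) ?_ γ hγ0
    fun t ht ↦ (hγ t ht).hasMFDerivWithinAt
  · rw [abs_mul, abs_of_pos hr.1]
    exact mul_le_of_le_one_right hr.1.le (abs_le_one_of_sum_sq_eq_one hθ i)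
  · simpa only [mul_smul, ← Finset.smul_sum] using smul_ne_zero hr.1.ne' hθx
end
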